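/- arXiv:math/0308189 — 8 statements merged into one kernel-verified Lean document; each statement's English description precedes it below -/
import Mathlib

section
/- Let B be a cocommutative bialgebra and C a B-bimodule algebra (an associative algebra that is simultaneously a left and right B-module algebra, with commuting left and right actions). Then the L-R smash product on the vector space C ⊗ B, defined by (f⊗a)⋆(g⊗b) = Σ_{(a)(b)} (f↼b₍₁₎)(a₍₁₎⇀g) ⊗ a₍₂₎b₍₂₎, is associative. -/
open TensorProduct

/-- `sweedMul m F G (Σ a₁ ⊗ a₂) = Σ m (F a₁) (G a₂)`: the Sweedler-style
combination used to express module-algebra conditions. -/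
noncomputable def sweedMul {k C B : Type*} [Field k] [AddCommGroup C] [Module k C]
    [AddCommGroup B] [Module k B]
    (m : C →ₗ[k] C →ₗ[k] C) (F G : B →ₗ[k] C) : B ⊗[k] B →ₗ[k] C :=
  (TensorProduct.lift m).comp (TensorProduct.map F G)

/-- The L-R smash product multiplication on `C ⊗ B`:
`(f ⊗ a) ⋆ (g ⊗ b) = Σ (f ↼ b₁)·(a₁ ⇀ g) ⊗ a₂ b₂`, where `l a g = a ⇀ g`
and `r b f = f ↼ b`, and `m` is the multiplication of `C`. -/
noncomputable def lrMul (k C B : Type*) [Field k] [AddCommGroup C] [Module k C]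
    [Ring B] [Bialgebra k B]
    (m : C →ₗ[k] C →ₗ[k] C) (l r : B →ₗ[k] C →ₗ[k] C) :
    (C ⊗[k] B) ⊗[k] (C ⊗[k] B) →ₗ[k] C ⊗[k] B :=
  (TensorProduct.map
    ((TensorProduct.lift m) ∘ₗ
      (TensorProduct.map (TensorProduct.lift r.flip) (TensorProduct.lift l.flip)) ∘ₗ
      (tensorTensorTensorComm k C C B B).toLinearMap ∘ₗ
      (TensorProduct.map LinearMap.id (TensorProduct.comm k B B).toLinearMap))
    LinearMap.id) ∘ₗ
  ((TensorProduct.assoc k (C ⊗[k] C) (B ⊗[k] B) B).symm.toLinearMap) ∘ₗ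
  (TensorProduct.map LinearMap.id (TensorProduct.map LinearMap.id (LinearMap.mul' k B))) ∘ₗ
  (TensorProduct.map LinearMap.id (tensorTensorTensorComm k B B B B).toLinearMap) ∘ₗ
  (tensorTensorTensorComm k C (B ⊗[k] B) C (B ⊗[k] B)).toLinearMap ∘ₗ
  (TensorProduct.map
    (TensorProduct.map LinearMap.id (Coalgebra.comul (R := k)))
    (TensorProduct.map LinearMap.id (Coalgebra.comul (R := k))))

section LRAux

variable {k C B : Type*} [Field k] [Ring C] [Algebra k C] [Ring B] [Bialgebra k B]
variable (l r : B →ₗ[k] C →ₗ[k] C)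

/-- the part of `lrMul` after the comultiplications. -/
noncomputable def lrStrip :
    (C ⊗[k] (B ⊗[k] B)) ⊗[k] (C ⊗[k] (B ⊗[k] B)) →ₗ[k] C ⊗[k] B :=
  (TensorProduct.map
    ((TensorProduct.lift (LinearMap.mul k C)) ∘ₗ
      (TensorProduct.map (TensorProduct.lift r.flip) (TensorProduct.lift l.flip)) ∘ₗ
      (tensorTensorTensorComm k C C B B).toLinearMap ∘ₗ
      (TensorProduct.map LinearMap.id (TensorProduct.comm k B B).toLinearMap))
    LinearMap.id) ∘ₗ
  ((TensorProduct.assoc k (C ⊗[k] C) (B ⊗[k] B) B).symm.toLinearMap) ∘ₗ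
  (TensorProduct.map LinearMap.id (TensorProduct.map LinearMap.id (LinearMap.mul' k B))) ∘ₗ
  (TensorProduct.map LinearMap.id (tensorTensorTensorComm k B B B B).toLinearMap) ∘ₗ
  (tensorTensorTensorComm k C (B ⊗[k] B) C (B ⊗[k] B)).toLinearMap

/-- the bilinear-in-the-comultiplications form of the smash multiplication. -/
noncomputable def lrCore (f g : C) :
    (B ⊗[k] B) ⊗[k] (B ⊗[k] B) →ₗ[k] C ⊗[k] B :=
  lrStrip l r ∘ₗ
    TensorProduct.map (TensorProduct.mk k C (B ⊗[k] B) f) (TensorProduct.mk k C (B ⊗[k] B) g)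

lemma lrCore_tmul (f g : C) (a1 a2 b1 b2 : B) :
    lrCore l r f g ((a1 ⊗ₜ[k] a2) ⊗ₜ[k] (b1 ⊗ₜ[k] b2)) =
      (r b1 f * l a1 g) ⊗ₜ[k] (a2 * b2) := by
  simp [lrCore, lrStrip, tensorTensorTensorComm_tmul]

lemma lrMul_tmul (f g : C) (a b : B) :
    lrMul k C B (LinearMap.mul k C) l r ((f ⊗ₜ[k] a) ⊗ₜ[k] (g ⊗ₜ[k] b)) =
      lrCore l r f g (Coalgebra.comul a ⊗ₜ[k] Coalgebra.comul b) := by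
  simp [lrMul, lrCore, lrStrip]

/-- `(b1 ⊗ c1) ↦ r c1 (r b1 f)` -/
noncomputable def lrW1 (f : C) : B ⊗[k] B →ₗ[k] C := TensorProduct.lift (r.flip ∘ₗ r.flip f)
/-- `(a1 ⊗ c2) ↦ r c2 (l a1 g)` -/
noncomputable def lrW2 (g : C) : B ⊗[k] B →ₗ[k] C := TensorProduct.lift (r.flip ∘ₗ l.flip g)
/-- `(a2 ⊗ b2) ↦ l a2 (l b2 h)` -/
noncomputable def lrW3 (h : C) : B ⊗[k] B →ₗ[k] C :=
  TensorProduct.lift (((LinearMap.llcomp k B C C).flip (l.flip h)) ∘ₗ l)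

/-- `((a1⊗a2)⊗(b2⊗c2)) ↦ r c2 (l a1 g) * l a2 (l b2 h)` -/
noncomputable def lrCP2 (g h : C) : (B ⊗[k] B) ⊗[k] (B ⊗[k] B) →ₗ[k] C :=
  TensorProduct.lift (LinearMap.mul k C) ∘ₗ TensorProduct.map (lrW2 l r g) (lrW3 l h) ∘ₗ
    (tensorTensorTensorComm k B B B B).toLinearMap ∘ₗ
    TensorProduct.map LinearMap.id (TensorProduct.comm k B B).toLinearMap

/-- `((b1⊗c1)⊗((a1⊗a2)⊗(b2⊗c2))) ↦ r c1 (r b1 f) * (r c2 (l a1 g) * l a2 (l b2 h))` -/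
noncomputable def lrCP (f g h : C) :
    (B ⊗[k] B) ⊗[k] ((B ⊗[k] B) ⊗[k] (B ⊗[k] B)) →ₗ[k] C :=
  TensorProduct.lift (LinearMap.mul k C) ∘ₗ TensorProduct.map (lrW1 r f) (lrCP2 l r g h) ∘ₗ
    (TensorProduct.leftComm k (B ⊗[k] B) (B ⊗[k] B) (B ⊗[k] B)).toLinearMap

noncomputable def lrBP : B ⊗[k] (B ⊗[k] B) →ₗ[k] B :=
  LinearMap.mul' k B ∘ₗ LinearMap.lTensor B (LinearMap.mul' k B)

noncomputable def lrShuffleBC :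
    (B ⊗[k] (B ⊗[k] B)) ⊗[k] ((B ⊗[k] B) ⊗[k] B) →ₗ[k]
      ((B ⊗[k] B) ⊗[k] (B ⊗[k] B)) ⊗[k] (B ⊗[k] B) :=
  (TensorProduct.assoc k (B ⊗[k] B) (B ⊗[k] B) (B ⊗[k] B)).symm.toLinearMap ∘ₗ
  LinearMap.lTensor (B ⊗[k] B) (tensorTensorTensorComm k B B B B).toLinearMap ∘ₗ
  (tensorTensorTensorComm k B (B ⊗[k] B) B (B ⊗[k] B)).toLinearMap ∘ₗ
  LinearMap.lTensor (B ⊗[k] (B ⊗[k] B)) (TensorProduct.assoc k B B B).toLinearMap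

/-- the canonical trilinear form both sides of associativity reduce to. -/
noncomputable def phiL (f g h : C) :
    (B ⊗[k] (B ⊗[k] B)) ⊗[k] ((B ⊗[k] (B ⊗[k] B)) ⊗[k] ((B ⊗[k] B) ⊗[k] B)) →ₗ[k]
      C ⊗[k] B :=
  TensorProduct.map (lrCP l r f g h) lrBP ∘ₗ
  (tensorTensorTensorComm k (B ⊗[k] B) B ((B ⊗[k] B) ⊗[k] (B ⊗[k] B)) (B ⊗[k] B)).toLinearMap ∘ₗ
  TensorProduct.map (TensorProduct.assoc k B B B).symm.toLinearMap (lrShuffleBC (B := B))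

lemma phiL_tmul (f g h : C) (a1 a2 a3 b1 b2 b3 c1 c2 c3 : B) :
    phiL l r f g h ((a1 ⊗ₜ[k] (a2 ⊗ₜ[k] a3)) ⊗ₜ[k]
      ((b1 ⊗ₜ[k] (b2 ⊗ₜ[k] b3)) ⊗ₜ[k] ((c1 ⊗ₜ[k] c2) ⊗ₜ[k] c3))) =
    (r c1 (r b1 f) * (r c2 (l a1 g) * l a2 (l b2 h))) ⊗ₜ[k] (a3 * (b3 * c3)) := by
  simp [phiL, lrShuffleBC, lrBP, lrCP, lrCP2, lrW1, lrW2, lrW3, tensorTensorTensorComm_tmul,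
    TensorProduct.leftComm]

noncomputable def lrSigmaB : B ⊗[k] (B ⊗[k] B) →ₗ[k] B ⊗[k] (B ⊗[k] B) :=
  (TensorProduct.assoc k B B B).toLinearMap ∘ₗ
  LinearMap.rTensor B (TensorProduct.comm k B B).toLinearMap ∘ₗ
  (TensorProduct.assoc k B B B).symm.toLinearMap

noncomputable def lrSigmaC : B ⊗[k] (B ⊗[k] B) →ₗ[k] (B ⊗[k] B) ⊗[k] B :=
  LinearMap.rTensor B (TensorProduct.comm k B B).toLinearMap ∘ₗ
  (TensorProduct.assoc k B B B).symm.toLinearMap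

/-- the canonical trilinear form, right-handed version. -/
noncomputable def phiR (f g h : C) :
    ((B ⊗[k] B) ⊗[k] B) ⊗[k] ((B ⊗[k] (B ⊗[k] B)) ⊗[k] (B ⊗[k] (B ⊗[k] B))) →ₗ[k]
      C ⊗[k] B :=
  phiL l r f g h ∘ₗ
    TensorProduct.map (TensorProduct.assoc k B B B).toLinearMap
      (TensorProduct.map (lrSigmaB (B := B) (k := k)) (lrSigmaC (B := B) (k := k)))

lemma phiR_tmul (f g h : C) (a1 a2 a3 b1 b2 b3 c1 c2 c3 : B) :
    phiR l r f g h (((a1 ⊗ₜ[k] a2) ⊗ₜ[k] a3) ⊗ₜ[k]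
      ((b1 ⊗ₜ[k] (b2 ⊗ₜ[k] b3)) ⊗ₜ[k] (c1 ⊗ₜ[k] (c2 ⊗ₜ[k] c3)))) =
    (r c2 (r b2 f) * (r c1 (l a1 g) * l a2 (l b1 h))) ⊗ₜ[k] (a3 * (b3 * c3)) := by
  simp [phiR, lrSigmaB, lrSigmaC]
  rw [phiL_tmul]

lemma comul_mul'' (x y : B) :
    Coalgebra.comul (R := k) (x * y) = Coalgebra.comul (R := k) x * Coalgebra.comul y :=
  map_mul (Bialgebra.comulAlgHom k B) x y

end LRAux

section LRChain

variable {k C B : Type*} [Field k] [Ring C] [Algebra k C] [Ring B] [Bialgebra k B]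
variable (l r : B →ₗ[k] C →ₗ[k] C)
variable (hlmod : ∀ (a b : B) (f : C), l (a * b) f = l a (l b f))
variable (hrmod : ∀ (a b : B) (f : C), r (a * b) f = r b (r a f))
variable (hlalg : ∀ (a : B) (f g : C),
      l a (f * g) = sweedMul (LinearMap.mul k C) (l.flip f) (l.flip g) (Coalgebra.comul a))
variable (hralg : ∀ (a : B) (f g : C),
      r a (f * g) = sweedMul (LinearMap.mul k C) (r.flip f) (r.flip g) (Coalgebra.comul a))
variable (hcompat : ∀ (a b : B) (f : C), r b (l a f) = l a (r b f))

section Left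

include hlmod hralg

lemma sub3L (f g h : C) (a1 a2 a3 b1 b2 b3 c3 : B) (t : B ⊗[k] B) :
    (sweedMul (LinearMap.mul k C) (r.flip (r b1 f)) (r.flip (l a1 g)) t * l a2 (l b2 h))
        ⊗ₜ[k] ((a3 * b3) * c3) =
      phiL l r f g h ((a1 ⊗ₜ[k] (a2 ⊗ₜ[k] a3)) ⊗ₜ[k]
        ((b1 ⊗ₜ[k] (b2 ⊗ₜ[k] b3)) ⊗ₜ[k] (t ⊗ₜ[k] c3))) := by
  induction t using TensorProduct.induction_on with
  | zero => simp [sweedMul]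
  | tmul c1 c2 =>
      rw [phiL_tmul]
      simp [sweedMul, mul_assoc]
  | add u v hu hv =>
      simp only [map_add, add_mul, add_tmul, tmul_add, hu, hv]

lemma sub2L (f g h : C) (a1 a2 a3 b1 b2 b3 : B) (w : B ⊗[k] B) :
    lrCore l r (r b1 f * l a1 g) h (((a2 * b2) ⊗ₜ[k] (a3 * b3)) ⊗ₜ[k] w) =
      phiL l r f g h ((a1 ⊗ₜ[k] (a2 ⊗ₜ[k] a3)) ⊗ₜ[k]
        ((b1 ⊗ₜ[k] (b2 ⊗ₜ[k] b3)) ⊗ₜ[k]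
          (LinearMap.rTensor B (Coalgebra.comul (R := k)) w))) := by
  induction w using TensorProduct.induction_on with
  | zero => simp
  | tmul c1 c2 =>
      rw [lrCore_tmul, LinearMap.rTensor_tmul, hralg, hlmod]
      exact sub3L l r hlmod hralg f g h a1 a2 a3 b1 b2 b3 c2 (Coalgebra.comul c1)
  | add u v hu hv =>
      simp only [map_add, tmul_add, hu, hv]

lemma sub1L (f g h : C) (a1 b1 : B) (u v w : B ⊗[k] B) :
    lrCore l r (r b1 f * l a1 g) h ((u * v) ⊗ₜ[k] w) =
      phiL l r f g h ((a1 ⊗ₜ[k] u) ⊗ₜ[k]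
        ((b1 ⊗ₜ[k] v) ⊗ₜ[k] (LinearMap.rTensor B (Coalgebra.comul (R := k)) w))) := by
  induction u using TensorProduct.induction_on with
  | zero => simp
  | tmul a2 a3 =>
      induction v using TensorProduct.induction_on with
      | zero => simp
      | tmul b2 b3 =>
          rw [Algebra.TensorProduct.tmul_mul_tmul]
          exact sub2L l r hlmod hralg f g h a1 a2 a3 b1 b2 b3 w
      | add v1 v2 hv1 hv2 =>
          simp only [mul_add, add_tmul, tmul_add, map_add, hv1, hv2]
  | add u1 u2 hu1 hu2 =>
      simp only [add_mul, add_tmul, tmul_add, map_add, hu1, hu2]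

lemma chainL (f g h : C) (c : B) (x y : B ⊗[k] B) :
    lrMul k C B (LinearMap.mul k C) l r ((lrCore l r f g (x ⊗ₜ[k] y)) ⊗ₜ[k] (h ⊗ₜ[k] c)) =
      phiL l r f g h ((LinearMap.lTensor B (Coalgebra.comul (R := k)) x) ⊗ₜ[k]
        ((LinearMap.lTensor B (Coalgebra.comul (R := k)) y) ⊗ₜ[k]
          (LinearMap.rTensor B (Coalgebra.comul (R := k)) (Coalgebra.comul c)))) := by
  induction x using TensorProduct.induction_on with
  | zero => simp
  | tmul a1 a2 =>
      induction y using TensorProduct.induction_on with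
      | zero => simp
      | tmul b1 b2 =>
          rw [lrCore_tmul, lrMul_tmul, comul_mul'', LinearMap.lTensor_tmul,
            LinearMap.lTensor_tmul]
          exact sub1L l r hlmod hralg f g h a1 b1 (Coalgebra.comul a2) (Coalgebra.comul b2)
            (Coalgebra.comul c)
      | add y1 y2 hy1 hy2 =>
          simp only [map_add, tmul_add, add_tmul, hy1, hy2]
  | add x1 x2 hx1 hx2 =>
      simp only [map_add, tmul_add, add_tmul, hx1, hx2]

end Left

section Right

include hrmod hlalg hcompat

lemma sub3R (f g h : C) (a3 b1 b2 b3 c1 c2 c3 : B) (t : B ⊗[k] B) :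
    (r c2 (r b2 f) * sweedMul (LinearMap.mul k C) (l.flip (r c1 g)) (l.flip (l b1 h)) t)
        ⊗ₜ[k] (a3 * (b3 * c3)) =
      phiR l r f g h ((t ⊗ₜ[k] a3) ⊗ₜ[k]
        ((b1 ⊗ₜ[k] (b2 ⊗ₜ[k] b3)) ⊗ₜ[k] (c1 ⊗ₜ[k] (c2 ⊗ₜ[k] c3)))) := by
  induction t using TensorProduct.induction_on with
  | zero => simp [sweedMul]
  | tmul a1 a2 =>
      rw [phiR_tmul]
      simp [sweedMul, hcompat, mul_assoc]
  | add u v hu hv =>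
      simp only [map_add, mul_add, add_tmul, tmul_add, hu, hv]

lemma sub2R (f g h : C) (b1 b2 b3 c1 c2 c3 : B) (w : B ⊗[k] B) :
    lrCore l r f (r c1 g * l b1 h) (w ⊗ₜ[k] ((b2 * c2) ⊗ₜ[k] (b3 * c3))) =
      phiR l r f g h ((LinearMap.rTensor B (Coalgebra.comul (R := k)) w) ⊗ₜ[k]
        ((b1 ⊗ₜ[k] (b2 ⊗ₜ[k] b3)) ⊗ₜ[k] (c1 ⊗ₜ[k] (c2 ⊗ₜ[k] c3)))) := by
  induction w using TensorProduct.induction_on with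
  | zero => simp
  | tmul a1 a2 =>
      rw [lrCore_tmul, LinearMap.rTensor_tmul, hrmod, hlalg]
      exact sub3R l r hrmod hlalg hcompat f g h a2 b1 b2 b3 c1 c2 c3 (Coalgebra.comul a1)
  | add u v hu hv =>
      simp only [map_add, add_tmul, hu, hv]

lemma sub1R (f g h : C) (b1 c1 : B) (u v w : B ⊗[k] B) :
    lrCore l r f (r c1 g * l b1 h) (w ⊗ₜ[k] (u * v)) =
      phiR l r f g h ((LinearMap.rTensor B (Coalgebra.comul (R := k)) w) ⊗ₜ[k]
        ((b1 ⊗ₜ[k] u) ⊗ₜ[k] (c1 ⊗ₜ[k] v))) := by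
  induction u using TensorProduct.induction_on with
  | zero => simp
  | tmul b2 b3 =>
      induction v using TensorProduct.induction_on with
      | zero => simp
      | tmul c2 c3 =>
          rw [Algebra.TensorProduct.tmul_mul_tmul]
          exact sub2R l r hrmod hlalg hcompat f g h b1 b2 b3 c1 c2 c3 w
      | add v1 v2 hv1 hv2 =>
          simp only [mul_add, add_tmul, tmul_add, map_add, hv1, hv2]
  | add u1 u2 hu1 hu2 =>
      simp only [add_mul, add_tmul, tmul_add, map_add, hu1, hu2]

lemma chainR (f g h : C) (a : B) (x y : B ⊗[k] B) :
    lrMul k C B (LinearMap.mul k C) l r ((f ⊗ₜ[k] a) ⊗ₜ[k] (lrCore l r g h (x ⊗ₜ[k] y))) =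
      phiR l r f g h ((LinearMap.rTensor B (Coalgebra.comul (R := k)) (Coalgebra.comul a)) ⊗ₜ[k]
        ((LinearMap.lTensor B (Coalgebra.comul (R := k)) x) ⊗ₜ[k]
          (LinearMap.lTensor B (Coalgebra.comul (R := k)) y))) := by
  induction x using TensorProduct.induction_on with
  | zero => simp
  | tmul b1 b2 =>
      induction y using TensorProduct.induction_on with
      | zero => simp
      | tmul c1 c2 =>
          rw [lrCore_tmul, lrMul_tmul, comul_mul'', LinearMap.lTensor_tmul,
            LinearMap.lTensor_tmul]
          exact sub1R l r hrmod hlalg hcompat f g h b1 c1 (Coalgebra.comul b2)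
            (Coalgebra.comul c2) (Coalgebra.comul a)
      | add y1 y2 hy1 hy2 =>
          simp only [map_add, tmul_add, add_tmul, hy1, hy2]
  | add x1 x2 hx1 hx2 =>
      simp only [map_add, tmul_add, add_tmul, hx1, hx2]

end Right

end LRChain

/-- if `B` is a cocommutative bialgebra and `C` a `B`-bimodule algebra,
then the L-R smash product on `C ⊗ B` is associative. -/
theorem lr_smash_assoc (k C B : Type*) [Field k] [Ring C] [Algebra k C]
    [Ring B] [Bialgebra k B]
    (l r : B →ₗ[k] C →ₗ[k] C)
    -- `B` is cocommutative
    (hcoc : ∀ b : B, (TensorProduct.comm k B B) (Coalgebra.comul b) = Coalgebra.comul b)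
    -- `C` is a left `B`-module
    (hlmod : ∀ (a b : B) (f : C), l (a * b) f = l a (l b f))
    -- `C` is a right `B`-module
    (hrmod : ∀ (a b : B) (f : C), r (a * b) f = r b (r a f))
    -- left module algebra: `a ⇀ (f·g) = Σ (a₁ ⇀ f)·(a₂ ⇀ g)`
    (hlalg : ∀ (a : B) (f g : C),
      l a (f * g) = sweedMul (LinearMap.mul k C) (l.flip f) (l.flip g) (Coalgebra.comul a))
    -- right module algebra: `(f·g) ↼ a = Σ (f ↼ a₁)·(g ↼ a₂)`
    (hralg : ∀ (a : B) (f g : C),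
      r a (f * g) = sweedMul (LinearMap.mul k C) (r.flip f) (r.flip g) (Coalgebra.comul a))
    -- the two actions commute: `(a ⇀ f) ↼ b = a ⇀ (f ↼ b)`
    (hcompat : ∀ (a b : B) (f : C), r b (l a f) = l a (r b f)) :
    ∀ x y z : C ⊗[k] B,
      lrMul k C B (LinearMap.mul k C) l r
          ((lrMul k C B (LinearMap.mul k C) l r (x ⊗ₜ[k] y)) ⊗ₜ[k] z) =
      lrMul k C B (LinearMap.mul k C) l r
          (x ⊗ₜ[k] (lrMul k C B (LinearMap.mul k C) l r (y ⊗ₜ[k] z))) := by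
  have hcocL : (TensorProduct.comm k B B).toLinearMap ∘ₗ (Coalgebra.comul (R := k) (A := B)) =
      Coalgebra.comul := LinearMap.ext hcoc
  -- key pointwise identity on pure tensors
  have key : ∀ (f g h : C) (a b c : B),
      lrMul k C B (LinearMap.mul k C) l r
          ((lrMul k C B (LinearMap.mul k C) l r ((f ⊗ₜ[k] a) ⊗ₜ[k] (g ⊗ₜ[k] b)))
            ⊗ₜ[k] (h ⊗ₜ[k] c)) =
      lrMul k C B (LinearMap.mul k C) l r
          ((f ⊗ₜ[k] a) ⊗ₜ[k]
            (lrMul k C B (LinearMap.mul k C) l r ((g ⊗ₜ[k] b) ⊗ₜ[k] (h ⊗ₜ[k] c)))) := by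
    intro f g h a b c
    rw [lrMul_tmul l r f g a b, lrMul_tmul l r g h b c,
      chainL l r hlmod hralg f g h c (Coalgebra.comul a) (Coalgebra.comul b),
      chainR l r hrmod hlalg hcompat f g h a (Coalgebra.comul b) (Coalgebra.comul c)]
    -- now reconcile the two `phi` forms using coassociativity and cocommutativity
    rw [phiR, LinearMap.comp_apply, TensorProduct.map_tmul, TensorProduct.map_tmul]
    -- compute each of the three slots
    have hswap : ∀ u : B, LinearMap.rTensor B (TensorProduct.comm k B B).toLinearMap
        (LinearMap.rTensor B (Coalgebra.comul (R := k)) (Coalgebra.comul u)) =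
        LinearMap.rTensor B (Coalgebra.comul (R := k)) (Coalgebra.comul u) := by
      intro u
      rw [← LinearMap.comp_apply, ← LinearMap.rTensor_comp, hcocL]
    have hA : (TensorProduct.assoc k B B B)
        (LinearMap.rTensor B (Coalgebra.comul (R := k)) (Coalgebra.comul a)) =
        LinearMap.lTensor B (Coalgebra.comul (R := k)) (Coalgebra.comul a) :=
      Coalgebra.coassoc_apply a
    have hB : lrSigmaB (LinearMap.lTensor B (Coalgebra.comul (R := k)) (Coalgebra.comul b)) =
        LinearMap.lTensor B (Coalgebra.comul (R := k)) (Coalgebra.comul b) := by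
      rw [lrSigmaB, LinearMap.comp_apply, LinearMap.comp_apply]
      rw [show (TensorProduct.assoc k B B B).symm.toLinearMap
          (LinearMap.lTensor B (Coalgebra.comul (R := k)) (Coalgebra.comul b)) =
          LinearMap.rTensor B (Coalgebra.comul (R := k)) (Coalgebra.comul b) from
        (LinearEquiv.symm_apply_eq _).mpr (Coalgebra.coassoc_apply b).symm]
      rw [hswap b]
      exact Coalgebra.coassoc_apply b
    have hC : lrSigmaC (LinearMap.lTensor B (Coalgebra.comul (R := k)) (Coalgebra.comul c)) =
        LinearMap.rTensor B (Coalgebra.comul (R := k)) (Coalgebra.comul c) := by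
      rw [lrSigmaC, LinearMap.comp_apply]
      rw [show (TensorProduct.assoc k B B B).symm.toLinearMap
          (LinearMap.lTensor B (Coalgebra.comul (R := k)) (Coalgebra.comul c)) =
          LinearMap.rTensor B (Coalgebra.comul (R := k)) (Coalgebra.comul c) from
        (LinearEquiv.symm_apply_eq _).mpr (Coalgebra.coassoc_apply c).symm]
      exact hswap c
    rw [LinearEquiv.coe_coe, hA, hB, hC]
  intro x y z
  induction x using TensorProduct.induction_on with
  | zero => simp
  | tmul f a =>
      induction y using TensorProduct.induction_on with
      | zero => simp
      | tmul g b =>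
          induction z using TensorProduct.induction_on with
          | zero => simp
          | tmul h c => exact key f g h a b c
          | add z1 z2 hz1 hz2 => simp only [tmul_add, add_tmul, map_add, hz1, hz2]
      | add y1 y2 hy1 hy2 => simp only [tmul_add, add_tmul, map_add, hy1, hy2]
  | add x1 x2 hx1 hx2 => simp only [tmul_add, add_tmul, map_add, hx1, hx2]
end

section
/- Let g be a finite-dimensional real Lie algebra with an involutive automorphism σ, eigenspace decomposition g = k ⊕ p (with k the +1 and p the −1 eigenspace), satisfying [p,p] = k. Suppose Ω is a skew-symmetric bilinear form on g which is a Chevalley 2-cocycle, nondegenerate on p × p, with i(X)Ω = 0 for all X ∈ k. Then [k,p] is an Ω-isotropic subspace of p if and only if the derived algebra [g,g] is abelian. -/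
/-- for a symplectic triple `(g, σ, Ω)` (with eigenspace decomposition
`g = K ⊕ P`, `[P,P] = K`, the action of `K` on `P` faithful, `Ω` a Chevalley 2-cocycle
with `ι_K Ω = 0` and `Ω` nondegenerate on `P`), the subspace `[K,P]` is `Ω`-isotropic
if and only if the derived algebra `[g,g]` is abelian. -/
theorem holonomy_isotropic_iff_derived_abelian
    (g : Type*) [LieRing g] [LieAlgebra ℝ g] [FiniteDimensional ℝ g]
    (K P : Submodule ℝ g)
    (Ω : g →ₗ[ℝ] g →ₗ[ℝ] ℝ)
    -- `g = K ⊕ P`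
    (hcompl : IsCompl K P)
    -- bracket relations coming from the involution `σ`
    (hkk : ∀ x ∈ K, ∀ y ∈ K, ⁅x, y⁆ ∈ K)
    (hkp : ∀ x ∈ K, ∀ y ∈ P, ⁅x, y⁆ ∈ P)
    (hpp : ∀ x ∈ P, ∀ y ∈ P, ⁅x, y⁆ ∈ K)
    -- `[P,P] = K`
    (hppk : K ≤ Submodule.span ℝ {z : g | ∃ x ∈ P, ∃ y ∈ P, z = ⁅x, y⁆})
    -- the (adjoint) action of `K` on `P` is faithful
    (hfaith : ∀ x ∈ K, (∀ y ∈ P, ⁅x, y⁆ = 0) → x = 0)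
    -- `Ω` is skew-symmetric
    (hskew : ∀ x y : g, Ω x y = - Ω y x)
    -- `Ω` is a Chevalley 2-cocycle for the trivial representation
    (hcocycle : ∀ x y z : g, Ω ⁅x, y⁆ z + Ω ⁅y, z⁆ x + Ω ⁅z, x⁆ y = 0)
    -- `ι_K Ω = 0`
    (hik : ∀ x ∈ K, ∀ y : g, Ω x y = 0)
    -- `Ω` is nondegenerate on `P × P`
    (hnond : ∀ x ∈ P, (∀ y ∈ P, Ω x y = 0) → x = 0) :
    (∀ a ∈ K, ∀ x ∈ P, ∀ b ∈ K, ∀ y ∈ P, Ω ⁅a, x⁆ ⁅b, y⁆ = 0) ↔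
      (∀ x y z w : g, ⁅(⁅x, y⁆ : g), (⁅z, w⁆ : g)⁆ = 0) := by
  -- key cocycle identity: `Ω ⁅a,x⁆ y = Ω ⁅a,y⁆ x` for `a ∈ K`, `x y ∈ P`.
  have key : ∀ a ∈ K, ∀ x ∈ P, ∀ y ∈ P, Ω ⁅a, x⁆ y = Ω ⁅a, y⁆ x := by
    intro a ha x hx y hy
    have h1 := hcocycle a x y
    have h2 : Ω ⁅x, y⁆ a = 0 := hik _ (hpp x hx y hy) a
    have h3 : Ω ⁅y, a⁆ x = - Ω ⁅a, y⁆ x := by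
      rw [← lie_skew a y, map_neg, LinearMap.neg_apply, neg_neg]
    rw [h2, h3] at h1; linarith
  constructor
  · intro hiso
    have L1 : ∀ a ∈ K, ∀ b ∈ K, ∀ y ∈ P, ⁅a, ⁅b, y⁆⁆ = 0 := by
      intro a ha b hb y hy
      refine hnond _ (hkp a ha _ (hkp b hb y hy)) ?_
      intro z hz
      rw [key a ha _ (hkp b hb y hy) z hz, hiso a ha z hz b hb y hy]
    have L2 : ∀ a ∈ K, ∀ b ∈ K, ⁅a, b⁆ = 0 := by
      intro a ha b hb
      refine hfaith _ (hkk a ha b hb) ?_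
      intro y hy
      rw [lie_lie, L1 a ha b hb y hy, L1 b hb a ha y hy, sub_zero]
    have L4 : ∀ u v : g,
        (u ∈ K ∨ ∃ a ∈ K, ∃ x ∈ P, u = ⁅a, x⁆) →
        (v ∈ K ∨ ∃ a ∈ K, ∃ x ∈ P, v = ⁅a, x⁆) → ⁅u, v⁆ = 0 := by
      rintro u v (hu | ⟨a, ha, x, hx, rfl⟩) (hv | ⟨b, hb, y, hy, rfl⟩)
      · exact L2 u hu v hv
      · exact L1 u hu b hb y hy
      · rw [← lie_skew, L1 v hv a ha x hx, neg_zero]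
      · -- `⁅⁅a,x⁆,⁅b,y⁆⁆ ∈ K`; use faithfulness
        refine hfaith _ (hpp _ (hkp a ha x hx) _ (hkp b hb y hy)) ?_
        intro z hz
        rw [lie_lie]
        rw [← lie_skew ⁅a, x⁆, L1 _ (hpp _ (hkp b hb y hy) z hz) a ha x hx,
          ← lie_skew ⁅b, y⁆, L1 _ (hpp _ (hkp a ha x hx) z hz) b hb y hy]
        simp
    have L5 : ∀ s t : g, (s ∈ K ∨ s ∈ P) → (t ∈ K ∨ t ∈ P) →
        (⁅s, t⁆ ∈ K ∨ ∃ a ∈ K, ∃ x ∈ P, ⁅s, t⁆ = ⁅a, x⁆) := by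
      rintro s t (hs | hs) (ht | ht)
      · exact Or.inl (hkk s hs t ht)
      · exact Or.inr ⟨s, hs, t, ht, rfl⟩
      · refine Or.inr ⟨t, ht, -s, neg_mem hs, ?_⟩
        rw [lie_neg, ← lie_skew]
      · exact Or.inl (hpp s hs t ht)
    have main : ∀ s t s' t' : g, (s ∈ K ∨ s ∈ P) → (t ∈ K ∨ t ∈ P) →
        (s' ∈ K ∨ s' ∈ P) → (t' ∈ K ∨ t' ∈ P) → ⁅(⁅s, t⁆ : g), (⁅s', t'⁆ : g)⁆ = 0 :=
      fun s t s' t' hs ht hs' ht' => L4 _ _ (L5 s t hs ht) (L5 s' t' hs' ht')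
    have stageB : ∀ s t : g, (s ∈ K ∨ s ∈ P) → (t ∈ K ∨ t ∈ P) → ∀ z w : g,
        ⁅(⁅s, t⁆ : g), (⁅z, w⁆ : g)⁆ = 0 := by
      intro s t hs ht z w
      obtain ⟨zk, hzk, zp, hzp, rfl⟩ : ∃ zk ∈ K, ∃ zp ∈ P, z = zk + zp := by
        have : z ∈ K ⊔ P := by rw [hcompl.sup_eq_top]; trivial
        obtain ⟨zk, hzk, zp, hzp, h⟩ := Submodule.mem_sup.mp this
        exact ⟨zk, hzk, zp, hzp, h.symm⟩
      obtain ⟨wk, hwk, wp, hwp, rfl⟩ : ∃ wk ∈ K, ∃ wp ∈ P, w = wk + wp := by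
        have : w ∈ K ⊔ P := by rw [hcompl.sup_eq_top]; trivial
        obtain ⟨wk, hwk, wp, hwp, h⟩ := Submodule.mem_sup.mp this
        exact ⟨wk, hwk, wp, hwp, h.symm⟩
      simp only [lie_add, add_lie,
        main s t zk wk hs ht (Or.inl hzk) (Or.inl hwk),
        main s t zk wp hs ht (Or.inl hzk) (Or.inr hwp),
        main s t zp wk hs ht (Or.inr hzp) (Or.inl hwk),
        main s t zp wp hs ht (Or.inr hzp) (Or.inr hwp), add_zero]
    intro x y z w
    obtain ⟨xk, hxk, xp, hxp, rfl⟩ : ∃ xk ∈ K, ∃ xp ∈ P, x = xk + xp := by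
      have : x ∈ K ⊔ P := by rw [hcompl.sup_eq_top]; trivial
      obtain ⟨xk, hxk, xp, hxp, h⟩ := Submodule.mem_sup.mp this
      exact ⟨xk, hxk, xp, hxp, h.symm⟩
    obtain ⟨yk, hyk, yp, hyp, rfl⟩ : ∃ yk ∈ K, ∃ yp ∈ P, y = yk + yp := by
      have : y ∈ K ⊔ P := by rw [hcompl.sup_eq_top]; trivial
      obtain ⟨yk, hyk, yp, hyp, h⟩ := Submodule.mem_sup.mp this
      exact ⟨yk, hyk, yp, hyp, h.symm⟩
    simp only [lie_add, add_lie,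
      stageB xk yk (Or.inl hxk) (Or.inl hyk) z w,
      stageB xk yp (Or.inl hxk) (Or.inr hyp) z w,
      stageB xp yk (Or.inr hxp) (Or.inl hyk) z w,
      stageB xp yp (Or.inr hxp) (Or.inr hyp) z w, add_zero]
  · intro hab a ha x hx b hb y hy
    -- any element of `K` kills any bracket
    have habK : ∀ c ∈ K, ∀ z w : g, ⁅c, ⁅z, w⁆⁆ = 0 := by
      intro c hc z w
      let f : g →ₗ[ℝ] g :=
        { toFun := fun u => ⁅u, ⁅z, w⁆⁆
          map_add' := fun u v => add_lie u v _
          map_smul' := fun r u => smul_lie r u _ }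
      have hle : Submodule.span ℝ {u : g | ∃ x ∈ P, ∃ y ∈ P, u = ⁅x, y⁆} ≤
          LinearMap.ker f := by
        rw [Submodule.span_le]
        rintro u ⟨p1, hp1, p2, hp2, rfl⟩
        exact hab p1 p2 z w
      exact hle (hppk hc)
    rw [key a ha x hx _ (hkp b hb y hy), habK a ha b y]
    simp
end

section
/- Let (g, σ, Ω) be a symplectic triple such that [g,g] is abelian and the extension 0 → [g,g] → g → g/[g,g] → 0 splits, so g = b ×_ρ a with b = [g,g] abelian and a abelian. Then one can choose the complement a to be stable under σ; concretely, if for a ∈ a one writes a = a_k + a_p with respect to g = k ⊕ p, then pr_p(a) := {a_p : a ∈ a} is an abelian subalgebra of g complementary to b. -/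
/-- if `(g, σ, Ω)` is a holonomy isotropic (i.e. `[g,g]` abelian) split
triple, with splitting `g = b ×_ρ a`, `b = [g,g]`, then the complement `a` may be chosen
`σ`-stable: the set of `p`-components `pr_p(a)` of elements of `a` is an abelian
subalgebra of `g` complementary to `b`. -/
theorem split_HI_sigma_stable_complement
    (g : Type*) [LieRing g] [LieAlgebra ℝ g] [FiniteDimensional ℝ g]
    (K P : Submodule ℝ g)
    -- `g = K ⊕ P`
    (hcompl : IsCompl K P)
    -- bracket relations coming from the involution
    (hkk : ∀ x ∈ K, ∀ y ∈ K, ⁅x, y⁆ ∈ K)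
    (hkp : ∀ x ∈ K, ∀ y ∈ P, ⁅x, y⁆ ∈ P)
    (hpp : ∀ x ∈ P, ∀ y ∈ P, ⁅x, y⁆ ∈ K)
    -- `[P,P] = K`
    (hppk : K ≤ Submodule.span ℝ {z : g | ∃ x ∈ P, ∃ y ∈ P, z = ⁅x, y⁆})
    -- the derived algebra `b = [g,g]` is abelian
    (hder : ∀ x y z w : g, ⁅(⁅x, y⁆ : g), (⁅z, w⁆ : g)⁆ = 0)
    -- `b` is the span of all brackets
    (b : Submodule ℝ g) (hb : b = Submodule.span ℝ {z : g | ∃ x y : g, z = ⁅x, y⁆})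
    -- `a` is an abelian Lie subalgebra splitting the extension `0 → b → g → g/b → 0`
    (a : LieSubalgebra ℝ g)
    (hab : ∀ x ∈ a, ∀ y ∈ a, ⁅x, y⁆ = (0 : g))
    (hsplit : IsCompl b a.toSubmodule)
    -- `π` is the projection of `g` onto `P` along `K`
    (π : g →ₗ[ℝ] g)
    (hπP : ∀ x : g, π x ∈ P)
    (hπK : ∀ x : g, x - π x ∈ K) :
    (∀ x ∈ Submodule.map π a.toSubmodule, ∀ y ∈ Submodule.map π a.toSubmodule,
        ⁅x, y⁆ = (0 : g)) ∧
    IsCompl b (Submodule.map π a.toSubmodule) := by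
  -- every bracket lies in `b`
  have hbr : ∀ x y : g, ⁅x, y⁆ ∈ b := by
    intro x y
    rw [hb]
    exact Submodule.subset_span ⟨x, y, rfl⟩
  -- `K ≤ b`
  have hKb : K ≤ b := by
    refine le_trans hppk ?_
    rw [hb]
    refine Submodule.span_mono ?_
    rintro z ⟨x, -, y, -, rfl⟩
    exact ⟨x, y, rfl⟩
  -- `b` is abelian
  have bz : ∀ u ∈ b, ∀ v ∈ b, ⁅u, v⁆ = (0 : g) := by
    rw [hb]
    intro u hu
    induction hu using Submodule.span_induction with
    | mem z hz =>
      intro v hv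
      induction hv using Submodule.span_induction with
      | mem w hw =>
        obtain ⟨x, y, rfl⟩ := hz
        obtain ⟨x', y', rfl⟩ := hw
        exact hder x y x' y'
      | zero => simp
      | add w₁ w₂ _ _ h₁ h₂ => simp [lie_add, h₁, h₂]
      | smul c w _ h => simp [h]
    | zero => intro v hv; simp
    | add u₁ u₂ _ _ h₁ h₂ => intro v hv; simp [add_lie, h₁ v hv, h₂ v hv]
    | smul c u _ h => intro v hv; simp [h v hv]
  constructor
  · -- abelian
    rintro px ⟨x, hx, rfl⟩ py ⟨y, hy, rfl⟩
    have hkx : x - π x ∈ K := hπK x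
    have hky : y - π y ∈ K := hπK y
    -- in K
    have hinK : ⁅π x, π y⁆ ∈ K := hpp _ (hπP x) _ (hπP y)
    -- in P
    have e1 : ⁅π x, y⁆ = -⁅x - π x, π y⁆ := by
      have hxy : ⁅x, y⁆ = 0 := hab x hx y hy
      have hkk0 : ⁅x - π x, y - π y⁆ = 0 := bz _ (hKb hkx) _ (hKb hky)
      have expand : ⁅x - π x, π y⁆ + ⁅π x, y⁆ = 0 := by
        have : ⁅x, y⁆ = ⁅x - π x, y - π y⁆ + ⁅x - π x, π y⁆ + ⁅π x, y⁆ := by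
          simp only [sub_lie, lie_sub]; abel
        rw [hxy, hkk0] at this
        simpa using this.symm
      exact eq_neg_of_add_eq_zero_right expand
    have hinP : ⁅π x, π y⁆ ∈ P := by
      have h2 : ⁅π x, y - π y⁆ ∈ P := by
        have := hkp _ hky _ (hπP x)
        have h' : ⁅π x, y - π y⁆ = -⁅y - π y, π x⁆ := by rw [← lie_skew]
        rw [h']; exact P.neg_mem this
      have h3 : ⁅π x, y⁆ ∈ P := by
        rw [e1]; exact P.neg_mem (hkp _ hkx _ (hπP y))
      have : ⁅π x, π y⁆ = ⁅π x, y⁆ - ⁅π x, y - π y⁆ := by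
        simp [lie_sub]
      rw [this]; exact P.sub_mem h3 h2
    exact (Submodule.disjoint_def.mp hcompl.disjoint) _ hinK hinP
  · constructor
    · -- disjoint
      rw [Submodule.disjoint_def]
      rintro z hzb ⟨x, hx, rfl⟩
      have hxb : x ∈ b := by
        have : x = (x - π x) + π x := by abel
        rw [this]
        exact b.add_mem (hKb (hπK x)) hzb
      have hx0 : x = 0 := (Submodule.disjoint_def.mp hsplit.disjoint) x hxb hx
      simp [hx0]
    · -- codisjoint
      rw [codisjoint_iff, eq_top_iff]
      intro w _
      have hw : w ∈ b ⊔ a.toSubmodule := by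
        rw [hsplit.sup_eq_top]; trivial
      obtain ⟨u, hu, v, hv, rfl⟩ := Submodule.mem_sup.mp hw
      refine Submodule.mem_sup.mpr ⟨u + (v - π v), b.add_mem hu (hKb (hπK v)), π v,
        ⟨v, hv, rfl⟩, by abel⟩
end

section
/- Let t = (g, σ, Ω) be a symplectic triple with [g,g] abelian and split (g = b ×_ρ a with a σ-stable abelian complement to b = [g,g]). Assume t is indecomposable and non-flat. Set l = [k,p]. Then the pairing Ω: a × l → ℝ is nondegenerate (a and l are dual Lagrangian-type subspaces of p); equivalently, the subspace V := l^⊥ ∩ a (orthogonal with respect to Ω inside p) is zero. -/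
/-!
Let `l = [K,P]` and `V = a ∩ l^⊥`. Since `ι_K Ω = 0`, the cocycle identity makes each `ad k`
(`k ∈ K`) `Ω`-symmetric: `Ω [k,y] z = Ω [k,z] y`. Hence an element of `V` commutes with `K` (it is
`Ω`-orthogonal to `l`), then with `P` (by faithfulness, as `[g,g]` is abelian), so `V` is central
and the cocycle identity gives `Ω ([g,g], V) = 0`. Inside `P = l ⊕ a` the subspace `l` is
isotropic, so `l^⊥ = l ⊕ V`, which makes `Ω` nondegenerate on `V`. Thus `g = V ⊕ V^⊥` is a
splitting into `σ`-stable, `Ω`-orthogonal ideals; as `K ⊆ V^⊥` and `K ≠ 0`, indecomposability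
forces `V = 0`.
-/

open LinearMap (BilinForm)

namespace LinearMap.BilinForm

variable {k E : Type*} [Field k] [AddCommGroup E] [Module k E] {B : BilinForm k E}

theorem disjoint_inf_orthogonal_of_isCompl [FiniteDimensional k E] (hB : B.Nondegenerate)
    (hr : B.IsRefl) {L A : Submodule k E} (hLA : IsCompl L A) (hL : L ≤ B.orthogonal L) :
    Disjoint (A ⊓ B.orthogonal L) (B.orthogonal (A ⊓ B.orthogonal L)) := by
  have hLV : B.orthogonal L = L ⊔ A ⊓ B.orthogonal L := by
    rw [← sup_inf_assoc_of_le A hL, hLA.sup_eq_top, top_inf_eq]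
  rw [disjoint_iff_inf_le]
  rintro x ⟨⟨hxA, hxL⟩, hxV⟩
  have hx : x ∈ B.orthogonal (B.orthogonal L) := by
    rw [hLV]
    intro n hn
    obtain ⟨m, hm, u, hu, rfl⟩ := Submodule.mem_sup.1 hn
    have hmx : B m x = 0 := hxL m hm
    have hux : B u x = 0 := hxV u hu
    rw [map_add, LinearMap.add_apply, hmx, hux, add_zero]
  rw [orthogonal_orthogonal hB hr] at hx
  exact hLA.disjoint.le_bot ⟨hx, hxA⟩

theorem restrict_inf_orthogonal_nondegenerate (hr : B.IsRefl) {P L A : Submodule k E}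
    [FiniteDimensional k P] (hP : (B.restrict P).Nondegenerate) (hLP : L ≤ P) (hAP : A ≤ P)
    (hLA : IsCompl (L.comap P.subtype) (A.comap P.subtype)) (hL : L ≤ B.orthogonal L) :
    (B.restrict (A ⊓ B.orthogonal L)).Nondegenerate := by
  refine B.nondegenerate_restrict_of_disjoint_orthogonal hr ?_
  have hdisj := disjoint_inf_orthogonal_of_isCompl hP (fun x y => hr x y) hLA
    fun x hx n hn => hL hx n hn
  rw [disjoint_iff_inf_le]
  rintro x ⟨⟨hxA, hxL⟩, hxV⟩
  have := hdisj.le_bot (x := ⟨x, hAP hxA⟩) ⟨⟨hxA, fun n hn => hxL n hn⟩,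
    fun n hn => hxV n ⟨hn.1, fun m hm => hn.2 ⟨m, hLP hm⟩ hm⟩⟩
  simpa using this

theorem restrict_nondegenerate_of_forall (hr : B.IsRefl) {P : Submodule k E}
    (hP : ∀ x ∈ P, (∀ y ∈ P, B x y = 0) → x = 0) : (B.restrict P).Nondegenerate :=
  (LinearMap.IsRefl.nondegenerate_iff_separatingLeft (B := B.restrict P) fun x y => hr x y).2
    fun x hx => Subtype.ext (hP x x.2 fun y hy => hx ⟨y, hy⟩)

end LinearMap.BilinForm

open LinearMap.BilinForm

theorem apply_mem_of_le_of_eigenspaces {R M : Type*} [Ring R] [AddCommGroup M] [Module R M]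
    {K P W : Submodule R M} {σ : M →ₗ[R] M} (hσK : ∀ x ∈ K, σ x = x) (hσP : ∀ x ∈ P, σ x = -x)
    (hKP : K ⊔ P = ⊤) (hKW : K ≤ W) {w : M} (hw : w ∈ W) : σ w ∈ W := by
  obtain ⟨k, hk, p, hp, rfl⟩ := Submodule.mem_sup.1 (hKP ▸ Submodule.mem_top : w ∈ K ⊔ P)
  have hσw : σ (k + p) = k + k - (k + p) := by rw [map_add, hσK k hk, hσP p hp]; abel
  rw [hσw]
  exact W.sub_mem (W.add_mem (hKW hk) (hKW hk)) hw

section Lie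

variable {R g : Type*} [CommRing R] [LieRing g] [LieAlgebra R g]

def bracketSpan (S T : Submodule R g) : Submodule R g :=
  Submodule.span R {z | ∃ x ∈ S, ∃ y ∈ T, z = ⁅x, y⁆}

variable {S T : Submodule R g}

theorem lie_mem_bracketSpan {x y : g} (hx : x ∈ S) (hy : y ∈ T) : ⁅x, y⁆ ∈ bracketSpan S T :=
  Submodule.subset_span ⟨x, hx, y, hy, rfl⟩

theorem bracketSpan_le_iff {N : Submodule R g} :
    bracketSpan S T ≤ N ↔ ∀ x ∈ S, ∀ y ∈ T, ⁅x, y⁆ ∈ N := by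
  simp only [bracketSpan, Submodule.span_le, Set.subset_def, Set.mem_ofPred_eq, SetLike.mem_coe]
  grind

theorem bracketSpan_mono {S' T' : Submodule R g} (hS : S ≤ S') (hT : T ≤ T') :
    bracketSpan S T ≤ bracketSpan S' T' :=
  bracketSpan_le_iff.2 fun _ hx _ hy => lie_mem_bracketSpan (hS hx) (hT hy)

theorem span_lie_eq_bracketSpan_top :
    Submodule.span R {z : g | ∃ x y : g, z = ⁅x, y⁆} = bracketSpan ⊤ ⊤ := by
  simp [bracketSpan]

theorem lie_eq_zero_of_mem_bracketSpan_top (h : ∀ x y z w : g, ⁅⁅x, y⁆, ⁅z, w⁆⁆ = 0) {d e : g}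
    (hd : d ∈ bracketSpan (⊤ : Submodule R g) ⊤) (he : e ∈ bracketSpan (⊤ : Submodule R g) ⊤) :
    ⁅d, e⁆ = 0 := by
  have hgen (x y : g) :
      bracketSpan (⊤ : Submodule R g) ⊤ ≤ LinearMap.ker (LieAlgebra.ad R g ⁅x, y⁆) :=
    bracketSpan_le_iff.2 fun z _ w _ => h x y z w
  have he' : bracketSpan (⊤ : Submodule R g) ⊤ ≤ LinearMap.ker (LieAlgebra.ad R g e) :=
    bracketSpan_le_iff.2 fun x _ y _ => by
      rw [LinearMap.mem_ker, LieAlgebra.ad_apply, ← lie_skew]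
      exact neg_eq_zero.2 (hgen x y he)
  rw [← lie_skew, ← LieAlgebra.ad_apply R, he' hd, neg_zero]

theorem bracketSpan_top_le_sup {K P : Submodule R g} (hKP : K ⊔ P = ⊤)
    (hKK : ∀ x ∈ K, ∀ y ∈ K, ⁅x, y⁆ ∈ K) (hpp : ∀ x ∈ P, ∀ y ∈ P, ⁅x, y⁆ ∈ K) :
    bracketSpan ⊤ ⊤ ≤ K ⊔ bracketSpan K P := by
  refine bracketSpan_le_iff.2 fun x _ y _ => ?_
  obtain ⟨k₁, hk₁, p₁, hp₁, rfl⟩ := Submodule.mem_sup.1 (hKP ▸ Submodule.mem_top : x ∈ K ⊔ P)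
  obtain ⟨k₂, hk₂, p₂, hp₂, rfl⟩ := Submodule.mem_sup.1 (hKP ▸ Submodule.mem_top : y ∈ K ⊔ P)
  have hpk : ⁅p₁, k₂⁆ ∈ bracketSpan K P := by
    rw [← lie_skew]; exact Submodule.neg_mem _ (lie_mem_bracketSpan hk₂ hp₁)
  simp only [lie_add, add_lie]
  exact add_mem
    (add_mem (Submodule.mem_sup_left (hKK _ hk₁ _ hk₂))
      (Submodule.mem_sup_right hpk))
    (add_mem (Submodule.mem_sup_right (lie_mem_bracketSpan hk₁ hp₂))
      (Submodule.mem_sup_left (hpp _ hp₁ _ hp₂)))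

variable {Ω : BilinForm R g}

theorem mem_orthogonal_bracketSpan_iff {S T : Submodule R g} {n : g} :
    n ∈ Ω.orthogonal (bracketSpan S T) ↔ ∀ x ∈ S, ∀ y ∈ T, Ω ⁅x, y⁆ n = 0 := by
  refine ⟨fun h x hx y hy => h _ (lie_mem_bracketSpan hx hy), fun h m hm => ?_⟩
  exact (bracketSpan_le_iff (N := LinearMap.ker (Ω.flip n)) |>.2 h) hm

theorem apply_lie_comm_of_forall_apply_eq_zero (hskew : ∀ x y : g, Ω x y = - Ω y x)
    (hcocycle : ∀ x y z : g, Ω ⁅x, y⁆ z + Ω ⁅y, z⁆ x + Ω ⁅z, x⁆ y = 0)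
    {k : g} (hk : ∀ y, Ω k y = 0) (y z : g) : Ω ⁅k, y⁆ z = Ω ⁅k, z⁆ y := by
  have h := hcocycle k y z
  rw [hskew ⁅y, z⁆ k, hk, ← lie_skew z k, map_neg, LinearMap.neg_apply] at h
  linear_combination h

theorem apply_lie_eq_zero_of_forall_lie_eq_zero
    (hcocycle : ∀ x y z : g, Ω ⁅x, y⁆ z + Ω ⁅y, z⁆ x + Ω ⁅z, x⁆ y = 0)
    {v : g} (hv : ∀ z : g, ⁅v, z⁆ = 0) (x y : g) : Ω ⁅x, y⁆ v = 0 := by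
  have hyv : ⁅y, v⁆ = 0 := by rw [← lie_skew, hv, neg_zero]
  simpa [hyv, hv] using hcocycle x y v

theorem mem_orthogonal_bracketSpan_of_forall_lie_eq_zero (hskew : ∀ x y : g, Ω x y = - Ω y x)
    (hcocycle : ∀ x y z : g, Ω ⁅x, y⁆ z + Ω ⁅y, z⁆ x + Ω ⁅z, x⁆ y = 0)
    {K T : Submodule R g} (hK : ∀ x ∈ K, ∀ y : g, Ω x y = 0) {n : g}
    (hn : ∀ k ∈ K, ⁅k, n⁆ = 0) : n ∈ Ω.orthogonal (bracketSpan K T) :=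
  mem_orthogonal_bracketSpan_iff.2 fun k hk y _ => by
    rw [apply_lie_comm_of_forall_apply_eq_zero hskew hcocycle (hK k hk), hn k hk, map_zero,
      LinearMap.zero_apply]

theorem lie_eq_zero_of_mem_orthogonal_bracketSpan (hskew : ∀ x y : g, Ω x y = - Ω y x)
    (hcocycle : ∀ x y z : g, Ω ⁅x, y⁆ z + Ω ⁅y, z⁆ x + Ω ⁅z, x⁆ y = 0)
    {K P : Submodule R g} (hK : ∀ x ∈ K, ∀ y : g, Ω x y = 0)
    (hkp : ∀ x ∈ K, ∀ y ∈ P, ⁅x, y⁆ ∈ P) (hnond : ∀ x ∈ P, (∀ y ∈ P, Ω x y = 0) → x = 0)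
    {v : g} (hvP : v ∈ P) (hv : v ∈ Ω.orthogonal (bracketSpan K P)) {k : g} (hk : k ∈ K) :
    ⁅v, k⁆ = 0 := by
  rw [← lie_skew, neg_eq_zero]
  refine hnond _ (hkp k hk v hvP) fun q hq => ?_
  rw [apply_lie_comm_of_forall_apply_eq_zero hskew hcocycle (hK k hk)]
  exact mem_orthogonal_bracketSpan_iff.1 hv k hk q hq

theorem lie_eq_zero_of_mem_of_forall_lie_eq_zero (hHI : ∀ x y z w : g, ⁅⁅x, y⁆, ⁅z, w⁆⁆ = 0)
    {K P A : Submodule R g} (hKP : K ⊔ P = ⊤) (hDA : bracketSpan ⊤ ⊤ ⊔ A = ⊤) (hAP : A ≤ P)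
    (hA : ∀ x ∈ A, ∀ y ∈ A, ⁅x, y⁆ = 0) (hpp : ∀ x ∈ P, ∀ y ∈ P, ⁅x, y⁆ ∈ K)
    (hfaith : ∀ x ∈ K, (∀ y ∈ P, ⁅x, y⁆ = 0) → x = 0)
    {v : g} (hvA : v ∈ A) (hvK : ∀ k ∈ K, ⁅v, k⁆ = 0) (z : g) : ⁅v, z⁆ = 0 := by
  have hvP (p : g) (hp : p ∈ P) : ⁅v, p⁆ = 0 := by
    refine hfaith _ (hpp v (hAP hvA) p hp) fun q _ => ?_
    obtain ⟨d, hd, w, hw, rfl⟩ := Submodule.mem_sup.1 (hDA ▸ Submodule.mem_top : q ∈ _ ⊔ A)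
    have hd' : ⁅⁅v, p⁆, d⁆ = 0 :=
      lie_eq_zero_of_mem_bracketSpan_top hHI (lie_mem_bracketSpan trivial trivial) hd
    rw [lie_add, hd', zero_add, lie_lie, hvK _ (hpp p hp w (hAP hw)), hA v hvA w hw, lie_zero,
      sub_zero]
  obtain ⟨k, hk, p, hp, rfl⟩ := Submodule.mem_sup.1 (hKP ▸ Submodule.mem_top : z ∈ K ⊔ P)
  rw [lie_add, hvK k hk, hvP p hp, add_zero]

theorem isCompl_comap_subtype_bracketSpan {K P A : Submodule R g} (hKP : IsCompl K P)
    (hKK : ∀ x ∈ K, ∀ y ∈ K, ⁅x, y⁆ ∈ K) (hkp : ∀ x ∈ K, ∀ y ∈ P, ⁅x, y⁆ ∈ P)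
    (hpp : ∀ x ∈ P, ∀ y ∈ P, ⁅x, y⁆ ∈ K) (hDA : IsCompl (bracketSpan ⊤ ⊤) A) (hAP : A ≤ P) :
    IsCompl ((bracketSpan K P).comap P.subtype) (A.comap P.subtype) := by
  have hDP : bracketSpan ⊤ ⊤ ⊓ P ≤ bracketSpan K P := by
    calc bracketSpan ⊤ ⊤ ⊓ P ≤ (bracketSpan K P ⊔ K) ⊓ P := by
          gcongr; rw [sup_comm]; exact bracketSpan_top_le_sup hKP.sup_eq_top hKK hpp
      _ = bracketSpan K P := by
          rw [sup_inf_assoc_of_le K (bracketSpan_le_iff.2 hkp), hKP.disjoint.eq_bot, sup_bot_eq]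
  have hcomap : (bracketSpan ⊤ ⊤).comap P.subtype = (bracketSpan K P).comap P.subtype :=
    le_antisymm (fun x hx => hDP ⟨hx, x.2⟩)
      (Submodule.comap_mono (bracketSpan_mono le_top le_top))
  exact hcomap ▸ (Submodule.isCompl_comap_subtype_of_isCompl_of_le hDA.symm hAP).symm

end Lie

theorem dual_lagrangian_pairing_nondegenerate_general
    (g : Type*) [LieRing g] [LieAlgebra ℝ g] [FiniteDimensional ℝ g]
    (K P : Submodule ℝ g)
    (σ : g →ₗ[ℝ] g)
    (Ω : g →ₗ[ℝ] g →ₗ[ℝ] ℝ)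
    -- `σ` is an involutive automorphism with eigenspaces `K` and `P`
    (hσK : ∀ x ∈ K, σ x = x)
    (hσP : ∀ x ∈ P, σ x = -x)
    (hcompl : IsCompl K P)
    (hkp : ∀ x ∈ K, ∀ y ∈ P, ⁅x, y⁆ ∈ P)
    (hpp : ∀ x ∈ P, ∀ y ∈ P, ⁅x, y⁆ ∈ K)
    -- `[P,P] = K`
    (hppk : K ≤ Submodule.span ℝ {z : g | ∃ x ∈ P, ∃ y ∈ P, z = ⁅x, y⁆})
    -- faithfulness of the action of `K` on `P`
    (hfaith : ∀ x ∈ K, (∀ y ∈ P, ⁅x, y⁆ = 0) → x = 0)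
    -- `Ω` is a skew 2-cocycle with `ι_K Ω = 0`, nondegenerate on `P`
    (hskew : ∀ x y : g, Ω x y = - Ω y x)
    (hcocycle : ∀ x y z : g, Ω ⁅x, y⁆ z + Ω ⁅y, z⁆ x + Ω ⁅z, x⁆ y = 0)
    (hik : ∀ x ∈ K, ∀ y : g, Ω x y = 0)
    (hnond : ∀ x ∈ P, (∀ y ∈ P, Ω x y = 0) → x = 0)
    -- holonomy isotropic: `[g,g]` is abelian
    (hHI : ∀ x y z w : g, ⁅(⁅x, y⁆ : g), (⁅z, w⁆ : g)⁆ = 0)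
    -- split: `a ⊆ P` is an abelian subalgebra complementary to `[g,g]`
    (a : LieSubalgebra ℝ g)
    (haP : a.toSubmodule ≤ P)
    (hab : ∀ x ∈ a, ∀ y ∈ a, ⁅x, y⁆ = (0 : g))
    (hsplit : IsCompl (Submodule.span ℝ {z : g | ∃ x y : g, z = ⁅x, y⁆}) a.toSubmodule)
    -- non-flat
    (hnonflat : K ≠ ⊥)
    -- indecomposable: no nontrivial decomposition into `σ`-stable `Ω`-orthogonal ideals
    (hindec : ∀ W₁ W₂ : Submodule ℝ g,
      (∀ x : g, ∀ w ∈ W₁, ⁅x, w⁆ ∈ W₁) → (∀ x : g, ∀ w ∈ W₂, ⁅x, w⁆ ∈ W₂) →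
      (∀ w ∈ W₁, σ w ∈ W₁) → (∀ w ∈ W₂, σ w ∈ W₂) →
      IsCompl W₁ W₂ →
      (∀ w ∈ W₁, ∀ w' ∈ W₂, Ω w w' = 0) →
      W₁ = ⊥ ∨ W₂ = ⊥) :
    ∀ v ∈ a, (∀ x ∈ K, ∀ y ∈ P, Ω v ⁅x, y⁆ = 0) → v = 0 := by
  intro v hva hv
  rw [span_lie_eq_bracketSpan_top] at hsplit
  have hΩ : IsRefl Ω := fun x y h => by rw [hskew, h, neg_zero]
  have hD {d e : g} (hd : d ∈ bracketSpan (⊤ : Submodule ℝ g) ⊤)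
      (he : e ∈ bracketSpan (⊤ : Submodule ℝ g) ⊤) : ⁅d, e⁆ = 0 :=
    lie_eq_zero_of_mem_bracketSpan_top hHI hd he
  have hKD : K ≤ bracketSpan ⊤ ⊤ := hppk.trans (bracketSpan_mono le_top le_top)
  set V := a.toSubmodule ⊓ orthogonal Ω (bracketSpan K P)
  have hvV : v ∈ V := ⟨hva, mem_orthogonal_bracketSpan_iff.2 fun x hx y hy => by
    rw [hskew, hv x hx y hy, neg_zero]⟩
  have hVcentral (u : g) (hu : u ∈ V) : ∀ z : g, ⁅u, z⁆ = 0 :=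
    lie_eq_zero_of_mem_of_forall_lie_eq_zero hHI hcompl.sup_eq_top hsplit.sup_eq_top haP hab hpp
      hfaith hu.1 fun _ hk =>
        lie_eq_zero_of_mem_orthogonal_bracketSpan hskew hcocycle hik hkp hnond (haP hu.1) hu.2 hk
  have hl : bracketSpan K P ≤ orthogonal Ω (bracketSpan K P) :=
    fun n hn => mem_orthogonal_bracketSpan_of_forall_lie_eq_zero hskew hcocycle hik
      fun k hk => hD (hKD hk) (bracketSpan_mono le_top le_top hn)
  have hla : IsCompl ((bracketSpan K P).comap P.subtype) (a.toSubmodule.comap P.subtype) :=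
    isCompl_comap_subtype_bracketSpan hcompl
      (fun x hx y hy => hD (hKD hx) (hKD hy) ▸ K.zero_mem) hkp hpp hsplit haP
  have hV : IsCompl V (orthogonal Ω V) :=
    isCompl_orthogonal_of_restrict_nondegenerate hΩ <|
      restrict_inf_orthogonal_nondegenerate hΩ (restrict_nondegenerate_of_forall hΩ hnond)
        (bracketSpan_le_iff.2 hkp) haP hla hl
  have hKV : K ≤ orthogonal Ω V := fun k hk u _ => by rw [hskew, hik k hk, neg_zero]
  rcases hindec V (orthogonal Ω V)
      (fun x u hu => by rw [← lie_skew, hVcentral u hu, neg_zero]; exact V.zero_mem)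
      (fun x w hw u hu => by rw [hskew, apply_lie_eq_zero_of_forall_lie_eq_zero hcocycle
        (hVcentral u hu), neg_zero])
      (fun u hu => hσP u (haP hu.1) ▸ V.neg_mem hu)
      (fun w hw => apply_mem_of_le_of_eigenspaces hσK hσP hcompl.sup_eq_top hKV hw)
      hV (fun u hu w hw => hw u hu) with hV | hV
  · simpa [hV] using hvV
  · exact (hnonflat (eq_bot_iff.2 (hV ▸ hKV))).elim

/-- let `t = (g, σ, Ω)` be a split holonomy isotropic symplectic triple
(`[g,g]` abelian, `a ⊆ P` an abelian complement to the derived algebra), indecomposable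
and non-flat. Then the subspace `V = l^⊥ ∩ a` (with `l = [K,P]`) vanishes, i.e. the
pairing `Ω : a × l → ℝ` is nondegenerate. -/
theorem dual_lagrangian_pairing_nondegenerate
    (g : Type*) [LieRing g] [LieAlgebra ℝ g] [FiniteDimensional ℝ g]
    (K P : Submodule ℝ g)
    (σ : g →ₗ[ℝ] g)
    (Ω : g →ₗ[ℝ] g →ₗ[ℝ] ℝ)
    -- `σ` is an involutive automorphism with eigenspaces `K` and `P`
    (hσauto : ∀ x y : g, σ ⁅x, y⁆ = ⁅σ x, σ y⁆)
    (hσK : ∀ x ∈ K, σ x = x)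
    (hσP : ∀ x ∈ P, σ x = -x)
    (hcompl : IsCompl K P)
    (hkp : ∀ x ∈ K, ∀ y ∈ P, ⁅x, y⁆ ∈ P)
    (hpp : ∀ x ∈ P, ∀ y ∈ P, ⁅x, y⁆ ∈ K)
    -- `[P,P] = K`
    (hppk : K ≤ Submodule.span ℝ {z : g | ∃ x ∈ P, ∃ y ∈ P, z = ⁅x, y⁆})
    -- faithfulness of the action of `K` on `P`
    (hfaith : ∀ x ∈ K, (∀ y ∈ P, ⁅x, y⁆ = 0) → x = 0)
    -- `Ω` is a skew 2-cocycle with `ι_K Ω = 0`, nondegenerate on `P`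
    (hskew : ∀ x y : g, Ω x y = - Ω y x)
    (hcocycle : ∀ x y z : g, Ω ⁅x, y⁆ z + Ω ⁅y, z⁆ x + Ω ⁅z, x⁆ y = 0)
    (hik : ∀ x ∈ K, ∀ y : g, Ω x y = 0)
    (hnond : ∀ x ∈ P, (∀ y ∈ P, Ω x y = 0) → x = 0)
    -- holonomy isotropic: `[g,g]` is abelian
    (hHI : ∀ x y z w : g, ⁅(⁅x, y⁆ : g), (⁅z, w⁆ : g)⁆ = 0)
    -- split: `a ⊆ P` is an abelian subalgebra complementary to `[g,g]`
    (a : LieSubalgebra ℝ g)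
    (haP : a.toSubmodule ≤ P)
    (hab : ∀ x ∈ a, ∀ y ∈ a, ⁅x, y⁆ = (0 : g))
    (hsplit : IsCompl (Submodule.span ℝ {z : g | ∃ x y : g, z = ⁅x, y⁆}) a.toSubmodule)
    -- non-flat
    (hnonflat : K ≠ ⊥)
    -- indecomposable: no nontrivial decomposition into `σ`-stable `Ω`-orthogonal ideals
    (hindec : ∀ W₁ W₂ : Submodule ℝ g,
      (∀ x : g, ∀ w ∈ W₁, ⁅x, w⁆ ∈ W₁) → (∀ x : g, ∀ w ∈ W₂, ⁅x, w⁆ ∈ W₂) →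
      (∀ w ∈ W₁, σ w ∈ W₁) → (∀ w ∈ W₂, σ w ∈ W₂) →
      IsCompl W₁ W₂ →
      (∀ w ∈ W₁, ∀ w' ∈ W₂, Ω w w' = 0) →
      W₁ = ⊥ ∨ W₂ = ⊥) :
    ∀ v ∈ a, (∀ x ∈ K, ∀ y ∈ P, Ω v ⁅x, y⁆ = 0) → v = 0 :=
  dual_lagrangian_pairing_nondegenerate_general g K P σ Ω hσK hσP hcompl hkp hpp hppk hfaith hskew
    hcocycle hik hnond hHI a haP hab hsplit hnonflat hindec
end

section
/- Nilpotent case: if (g, σ, Ω) is a symplectic triple with [g,g] abelian, split, and the Lie algebra g is nilpotent, then the triple is flat, i.e. k = [p,p] = 0 acts trivially — every nilpotent HI split symplectic symmetric space is flat. -/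
/-!
Write `D = [g,g]` and `g = D ⊕ a`. Since both `D` and `a` are abelian,
`[d + α, d' + α'] = [d, α'] + [α, d']`, so `D ⊆ [g, D]`. An ideal contained in its own bracket
with `g` lies in every term of the lower central series, hence vanishes when `g` is nilpotent.
Thus `g` is abelian and `K = [P,P] = 0`.
-/

open LieSubmodule

section

variable {R L : Type*} [CommRing R] [LieRing L] [LieAlgebra R L]

lemma lie_eq_zero_of_mem_span {s t : Set L} (h : ∀ x ∈ s, ∀ y ∈ t, ⁅x, y⁆ = 0) {x y : L}
    (hx : x ∈ Submodule.span R s) (hy : y ∈ Submodule.span R t) : ⁅x, y⁆ = 0 := by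
  induction hx, hy using Submodule.span_induction₂ with
  | mem_mem x y hx hy => exact h x hx y hy
  | zero_left => exact zero_lie _
  | zero_right => exact lie_zero _
  | add_left _ _ _ _ _ _ h₁ h₂ => rw [add_lie, h₁, h₂, add_zero]
  | add_right _ _ _ _ _ _ h₁ h₂ => rw [lie_add, h₁, h₂, add_zero]
  | smul_left _ _ _ _ _ h => rw [smul_lie, h, smul_zero]
  | smul_right _ _ _ _ _ h => rw [lie_smul, h, smul_zero]

lemma LieIdeal.coe_lie_top_top :
    (⁅(⊤ : LieIdeal R L), (⊤ : LieIdeal R L)⁆ : LieIdeal R L).toSubmodule =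
      Submodule.span R {z | ∃ x y : L, z = ⁅x, y⁆} := by
  rw [lieIdeal_oper_eq_linear_span']
  congr
  ext z
  simp [eq_comm]

lemma LieIdeal.lie_lie_top_top_eq_bot (h : ∀ x y z w : L, ⁅⁅x, y⁆, ⁅z, w⁆⁆ = 0) :
    ⁅(⁅(⊤ : LieIdeal R L), (⊤ : LieIdeal R L)⁆ : LieIdeal R L),
      (⁅(⊤ : LieIdeal R L), (⊤ : LieIdeal R L)⁆ : LieIdeal R L)⁆ = ⊥ := by
  rw [lie_eq_bot_iff]
  intro x hx y hy
  rw [← mem_toSubmodule, LieIdeal.coe_lie_top_top] at hx hy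
  refine lie_eq_zero_of_mem_span ?_ hx hy
  rintro _ ⟨x, y, rfl⟩ _ ⟨z, w, rfl⟩
  exact h x y z w

lemma LieIdeal.lie_top_top_le_lie_top_of_sup_eq_top (I : LieIdeal R L) (a : LieSubalgebra R L)
    (hI : ⁅I, I⁆ = ⊥) (ha : ∀ x ∈ a, ∀ y ∈ a, ⁅x, y⁆ = 0)
    (hsup : I.toSubmodule ⊔ a.toSubmodule = ⊤) :
    ⁅(⊤ : LieIdeal R L), (⊤ : LieIdeal R L)⁆ ≤ ⁅(⊤ : LieIdeal R L), I⁆ := by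
  rw [lie_le_iff]
  intro x _ y _
  obtain ⟨d, hd, α, hα, rfl⟩ := Submodule.mem_sup.mp (hsup ▸ Submodule.mem_top : x ∈ _)
  obtain ⟨d', hd', α', hα', rfl⟩ := Submodule.mem_sup.mp (hsup ▸ Submodule.mem_top : y ∈ _)
  have hdd' : ⁅d, d'⁆ = 0 := (lie_eq_bot_iff I I).mp hI d hd d' hd'
  have hbracket : ⁅d + α, d' + α'⁆ = -⁅α', d⁆ + ⁅α, d'⁆ := by
    rw [add_lie, lie_add, lie_add, hdd', ha α hα α' hα', ← lie_skew α' d]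
    abel
  rw [hbracket]
  exact add_mem (neg_mem (lie_mem_lie (mem_top α') hd)) (lie_mem_lie (mem_top α) hd')

end

lemma LieSubmodule.eq_bot_of_le_lie_top {R L M : Type*} [CommRing R] [LieRing L]
    [LieAlgebra R L] [AddCommGroup M] [Module R M] [LieRingModule L M] [LieModule R L M]
    [LieModule.IsNilpotent L M] {N : LieSubmodule R L M} (h : N ≤ ⁅(⊤ : LieIdeal R L), N⁆) :
    N = ⊥ := by
  have hlcs : ∀ k, N ≤ LieModule.lowerCentralSeries R L M k := by
    intro k
    induction k with
    | zero => exact le_top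
    | succ k ih =>
      rw [LieModule.lowerCentralSeries_succ]
      exact h.trans (mono_lie_right _ ih)
  obtain ⟨k, hk⟩ := LieModule.IsNilpotent.nilpotent R L M
  exact le_bot_iff.mp (hk ▸ hlcs k)

theorem nilpotent_HI_split_is_flat_general
    (g : Type*) [LieRing g] [LieAlgebra ℝ g]
    (K P : Submodule ℝ g)
    -- `[P,P] = K`
    (hppk : K ≤ Submodule.span ℝ {z : g | ∃ x ∈ P, ∃ y ∈ P, z = ⁅x, y⁆})
    -- holonomy isotropic: `[g,g]` abelian
    (hHI : ∀ x y z w : g, ⁅(⁅x, y⁆ : g), (⁅z, w⁆ : g)⁆ = 0)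
    -- split: `a ⊆ P` is an abelian subalgebra complementary to `[g,g]`
    (a : LieSubalgebra ℝ g)
    (hab : ∀ x ∈ a, ∀ y ∈ a, ⁅x, y⁆ = (0 : g))
    (hsplit : IsCompl (Submodule.span ℝ {z : g | ∃ x y : g, z = ⁅x, y⁆}) a.toSubmodule)
    -- `g` is nilpotent
    (hnilp : LieRing.IsNilpotent g) :
    K = ⊥ := by
  set D : LieIdeal ℝ g := ⁅(⊤ : LieIdeal ℝ g), ⊤⁆
  have hD_le : D ≤ ⁅(⊤ : LieIdeal ℝ g), D⁆ :=
    LieIdeal.lie_top_top_le_lie_top_of_sup_eq_top D a (LieIdeal.lie_lie_top_top_eq_bot hHI) hab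
      (by rw [LieIdeal.coe_lie_top_top]; exact hsplit.sup_eq_top)
  have hD : D = ⊥ := eq_bot_of_le_lie_top hD_le
  have hbracket (x y : g) : ⁅x, y⁆ = 0 := by
    have hxy : ⁅x, y⁆ ∈ D := lie_mem_lie (mem_top x) (mem_top y)
    rwa [hD, mem_bot] at hxy
  refine le_bot_iff.mp (hppk.trans ?_)
  rw [Submodule.span_le]
  rintro _ ⟨x, -, y, -, rfl⟩
  exact (hbracket x y).symm ▸ zero_mem _

/-- a nilpotent holonomy isotropic split symplectic symmetric space is
flat: if the symplectic triple `(g, σ, Ω)` has `[g,g]` abelian, the extension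
`0 → [g,g] → g → g/[g,g] → 0` splits (with abelian complement `a ⊆ P`), and `g` is a
nilpotent Lie algebra, then `K = [P,P] = 0`. -/
theorem nilpotent_HI_split_is_flat
    (g : Type*) [LieRing g] [LieAlgebra ℝ g] [FiniteDimensional ℝ g]
    (K P : Submodule ℝ g)
    (Ω : g →ₗ[ℝ] g →ₗ[ℝ] ℝ)
    (hcompl : IsCompl K P)
    (hkk : ∀ x ∈ K, ∀ y ∈ K, ⁅x, y⁆ ∈ K)
    (hkp : ∀ x ∈ K, ∀ y ∈ P, ⁅x, y⁆ ∈ P)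
    (hpp : ∀ x ∈ P, ∀ y ∈ P, ⁅x, y⁆ ∈ K)
    -- `[P,P] = K`
    (hppk : K ≤ Submodule.span ℝ {z : g | ∃ x ∈ P, ∃ y ∈ P, z = ⁅x, y⁆})
    -- faithfulness of the action of `K` on `P`
    (hfaith : ∀ x ∈ K, (∀ y ∈ P, ⁅x, y⁆ = 0) → x = 0)
    -- `Ω` is a skew 2-cocycle with `ι_K Ω = 0`, nondegenerate on `P`
    (hskew : ∀ x y : g, Ω x y = - Ω y x)
    (hcocycle : ∀ x y z : g, Ω ⁅x, y⁆ z + Ω ⁅y, z⁆ x + Ω ⁅z, x⁆ y = 0)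
    (hik : ∀ x ∈ K, ∀ y : g, Ω x y = 0)
    (hnond : ∀ x ∈ P, (∀ y ∈ P, Ω x y = 0) → x = 0)
    -- holonomy isotropic: `[g,g]` abelian
    (hHI : ∀ x y z w : g, ⁅(⁅x, y⁆ : g), (⁅z, w⁆ : g)⁆ = 0)
    -- split: `a ⊆ P` is an abelian subalgebra complementary to `[g,g]`
    (a : LieSubalgebra ℝ g)
    (haP : a.toSubmodule ≤ P)
    (hab : ∀ x ∈ a, ∀ y ∈ a, ⁅x, y⁆ = (0 : g))
    (hsplit : IsCompl (Submodule.span ℝ {z : g | ∃ x y : g, z = ⁅x, y⁆}) a.toSubmodule)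
    -- `g` is nilpotent
    (hnilp : LieRing.IsNilpotent g) :
    K = ⊥ :=
  nilpotent_HI_split_is_flat_general g K P hppk hHI a hab hsplit hnilp
end

section
/- In the setting of the previous construction, let η ∈ d* with δη = ω (i.e. ω(·,·) on s), define ξ ∈ g* by ξ(X,X,0) := η(X) on k and ξ ≡ 0 on p. Then Ω := δξ (the Chevalley coboundary, Ω(u,v) = −ξ([u,v])) satisfies i(X)Ω = 0 for all X ∈ k, and the restriction of Ω to p × p is nondegenerate whenever ω is nondegenerate on s. -/
/-- in the double construction `g = (d ⊕ d) ⋊ a`, with `η ∈ d*`,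
`ξ(X,Y,w) := (η X + η Y)/2` (which equals `η(X)` on `k = {(X,X,0)}` and vanishes on
`p = {(X,−X,w)}`), the coboundary `Ω := δξ`, `Ω(u,v) = −ξ([u,v])`, satisfies
`ι_K Ω = 0`, and is nondegenerate on `p × p` whenever `ω = δη` is nondegenerate
on `s = d ⋊ a`. -/
theorem double_construction_coboundary
    (d a : Type*) [AddCommGroup d] [Module ℝ d] [AddCommGroup a] [Module ℝ a]
    (ρ : a →ₗ[ℝ] Module.End ℝ d)
    (hcomm : ∀ x y : a, ρ x ∘ₗ ρ y = ρ y ∘ₗ ρ x)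
    (br : d × d × a → d × d × a → d × d × a)
    (hbr : ∀ u v, br u v =
      (ρ u.2.2 v.1 - ρ v.2.2 u.1, - ρ u.2.2 v.2.1 + ρ v.2.2 u.2.1, 0))
    (σ : d × d × a → d × d × a)
    (hσ : ∀ u, σ u = (u.2.1, u.1, -u.2.2))
    (η : d →ₗ[ℝ] ℝ)
    (ξ : d × d × a → ℝ)
    (hξ : ∀ u, ξ u = (η u.1 + η u.2.1) / 2)
    (Ω : d × d × a → d × d × a → ℝ)
    (hΩ : ∀ u v, Ω u v = - ξ (br u v))
    -- `ω = δη` is the exact symplectic structure on `s = d ⋊ a`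
    (ω : d × a → d × a → ℝ)
    (hω : ∀ u v, ω u v = - η (ρ u.2 v.1 - ρ v.2 u.1))
    -- `ω` is nondegenerate
    (hnd : ∀ u : d × a, (∀ v, ω u v = 0) → u = 0) :
    -- `ι_K Ω = 0` : `Ω(x,·) = 0` for `x` in the fixed point set of `σ`
    (∀ u, σ u = u → ∀ v, Ω u v = 0) ∧
    -- nondegeneracy on `p × p`
    (∀ u, σ u = -u → (∀ v, σ v = -v → Ω u v = 0) → u = 0) := by
  constructor
  · intro u hu v
    rw [hσ u] at hu
    obtain ⟨h1, h2, h3⟩ : u.2.1 = u.1 ∧ u.1 = u.2.1 ∧ -u.2.2 = u.2.2 := by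
      simpa [Prod.ext_iff] using hu
    have hz : u.2.2 = 0 := by
      have h4 : (2:ℝ) • u.2.2 = 0 := by
        rw [two_smul]; nth_rewrite 1 [← h3]; abel
      simpa using (smul_eq_zero.mp h4).resolve_left (by norm_num)
    rw [hΩ, hbr, hξ]
    simp [hz, h1, map_sub, map_neg, map_add]
  · intro u hu h
    rw [hσ u] at hu
    obtain ⟨h1, h2, h3⟩ : u.2.1 = -u.1 ∧ u.1 = -u.2.1 ∧ (-u.2.2 : a) = -u.2.2 := by
      simpa [Prod.ext_iff] using hu
    have key : (u.1, u.2.2) = (0 : d × a) := by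
      apply hnd
      intro v
      have hv : σ (v.1, -v.1, v.2) = -(v.1, -v.1, v.2) := by
        rw [hσ]; simp [Prod.ext_iff]
      have := h (v.1, -v.1, v.2) hv
      rw [hΩ, hbr, hξ] at this
      simp only at this
      rw [hω]
      simp only [h1, map_smul, map_add, map_sub, map_neg] at this ⊢
      linarith
    have k1 : u.1 = 0 := congrArg Prod.fst key
    have k2 : u.2.2 = 0 := congrArg Prod.snd key
    have k3 : u.2.1 = 0 := by rw [h1, k1, neg_zero]
    exact Prod.ext k1 (Prod.ext k3 k2)
end

section
/- Let G be a group with a normal subgroup Q and a subgroup S = A·B where B is normal in S and Q commutes with B elementwise ([B,Q]=e), such that the map Q × S → G, (q,s) ↦ qs, is a bijection. Suppose H^S is an S-left-invariant subspace of functions on S with an S-left-invariant associative product ⋆^S. Then H := {u: G → k | ∀q ∈ Q, u(q,·) ∈ H^S} with product (u⋆v)(q,s) := (u(q,·) ⋆^S v(q,·))(s) is an associative algebra on which G acts by algebra automorphisms via the left regular representation. -/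
/-- let `G` be a group with a normal subgroup `Q`, a subgroup `S = A·B`
with `B` normal in `S` and `[B,Q] = e`, such that `(q,s) ↦ q·s` is a bijection
`Q × S → G` (with chart maps `qof`, `sof`). Given an `S`-left-invariant subspace
`HS` of functions on `S` with an `S`-left-invariant associative product `stS`,
the space `H = {u : G → R | u(q,·) ∈ HS}` with product
`(u ⋆ v)(q,s) = (u(q,·) ⋆^S v(q,·))(s)` is an associative algebra, invariant under the
left regular representation of `G`, and the product is `G`-left-invariant. -/
theorem induced_invariant_product
    (R : Type*) [CommRing R]
    (G : Type*) [Group G]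
    (Q S A B : Subgroup G)
    (hQ : Q.Normal)
    (hAS : A ≤ S) (hBS : B ≤ S)
    -- `B` is normal in `S`
    (hBnorm : ∀ s ∈ S, ∀ b ∈ B, s * b * s⁻¹ ∈ B)
    -- `Q` and `B` commute elementwise
    (hcomm : ∀ b ∈ B, ∀ q ∈ Q, b * q = q * b)
    -- `S = A · B`
    (hSAB : ∀ s ∈ S, ∃ x ∈ A, ∃ y ∈ B, s = x * y)
    -- the chart `Q × S → G` and its inverse
    (qof : G → Q) (sof : G → S)
    (hchart : ∀ g : G, g = (qof g : G) * (sof g : G))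
    (hchartu : ∀ (q : Q) (s : S), qof ((q : G) * (s : G)) = q ∧ sof ((q : G) * (s : G)) = s)
    -- the invariant algebra of functions on `S`
    (HS : Set (↥S → R))
    (stS : (↥S → R) → (↥S → R) → (↥S → R))
    (hclosed : ∀ u ∈ HS, ∀ v ∈ HS, stS u v ∈ HS)
    (hSassoc : ∀ u ∈ HS, ∀ v ∈ HS, ∀ w ∈ HS, stS (stS u v) w = stS u (stS v w))
    (hSinv : ∀ (s : S), ∀ u ∈ HS, (fun x => u (s * x)) ∈ HS)
    (hSlinv : ∀ (s : S) (u v : ↥S → R),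
      stS (fun x => u (s * x)) (fun x => v (s * x)) = fun x => stS u v (s * x)) :
    -- `H` is closed under the induced product
    (∀ u v : G → R,
      (∀ q : Q, (fun s : S => u ((q : G) * (s : G))) ∈ HS) →
      (∀ q : Q, (fun s : S => v ((q : G) * (s : G))) ∈ HS) →
      (∀ q : Q, (fun s : S =>
        (stS (fun x : S => u ((qof ((q : G) * (s : G)) : G) * (x : G)))
             (fun x : S => v ((qof ((q : G) * (s : G)) : G) * (x : G))))
          (sof ((q : G) * (s : G)))) ∈ HS)) ∧
    -- associativity of the induced product on `H`
    (∀ u v w : G → R,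
      (∀ q : Q, (fun s : S => u ((q : G) * (s : G))) ∈ HS) →
      (∀ q : Q, (fun s : S => v ((q : G) * (s : G))) ∈ HS) →
      (∀ q : Q, (fun s : S => w ((q : G) * (s : G))) ∈ HS) →
      (fun g : G =>
        (stS (fun x : S =>
            (stS (fun y : S => u ((qof ((qof g : G) * (x : G)) : G) * (y : G)))
                 (fun y : S => v ((qof ((qof g : G) * (x : G)) : G) * (y : G))))
              (sof ((qof g : G) * (x : G))))
          (fun x : S => w ((qof g : G) * (x : G)))) (sof g)) =
      (fun g : G =>
        (stS (fun x : S => u ((qof g : G) * (x : G)))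
          (fun x : S =>
            (stS (fun y : S => v ((qof ((qof g : G) * (x : G)) : G) * (y : G)))
                 (fun y : S => w ((qof ((qof g : G) * (x : G)) : G) * (y : G))))
              (sof ((qof g : G) * (x : G))))) (sof g))) ∧
    -- `H` is invariant under the left regular representation of `G`
    (∀ (g₀ : G) (u : G → R),
      (∀ q : Q, (fun s : S => u ((q : G) * (s : G))) ∈ HS) →
      (∀ q : Q, (fun s : S => u (g₀ * ((q : G) * (s : G)))) ∈ HS)) ∧
    -- left invariance of the induced product
    (∀ (g₀ : G) (u v : G → R),
      (∀ q : Q, (fun s : S => u ((q : G) * (s : G))) ∈ HS) →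
      (∀ q : Q, (fun s : S => v ((q : G) * (s : G))) ∈ HS) →
      (fun g : G =>
        (stS (fun x : S => u (g₀ * ((qof g : G) * (x : G))))
             (fun x : S => v (g₀ * ((qof g : G) * (x : G))))) (sof g)) =
      (fun g : G =>
        (stS (fun x : S => u ((qof (g₀ * g) : G) * (x : G)))
             (fun x : S => v ((qof (g₀ * g) : G) * (x : G)))) (sof (g₀ * g)))) := by
  have h1 : ∀ (q : Q) (s : S), qof ((q : G) * (s : G)) = q := fun q s => (hchartu q s).1
  have h2 : ∀ (q : Q) (s : S), sof ((q : G) * (s : G)) = s := fun q s => (hchartu q s).2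
  have key : ∀ (g₀ : G) (q : Q), ∃ q' : Q,
      g₀ * (q : G) = (q' : G) * ((sof g₀ : G)) := by
    intro g₀ q
    obtain ⟨a, ha, b, hb, hab⟩ := hSAB (sof g₀ : G) (sof g₀).2
    refine ⟨qof g₀ * ⟨a * (q : G) * a⁻¹, hQ.conj_mem (q : G) q.2 a⟩, ?_⟩
    push_cast
    conv_lhs => rw [hchart g₀, hab]
    rw [hab, mul_assoc (qof g₀ : G), mul_assoc a, hcomm b hb (q : G) q.2]
    group
  refine ⟨?_, ?_, ?_, ?_⟩
  · intro u v hu hv q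
    have e : (fun s : S =>
        (stS (fun x : S => u ((qof ((q : G) * (s : G)) : G) * (x : G)))
             (fun x : S => v ((qof ((q : G) * (s : G)) : G) * (x : G))))
          (sof ((q : G) * (s : G))))
        = stS (fun x : S => u ((q : G) * (x : G))) (fun x : S => v ((q : G) * (x : G))) := by
      funext s
      rw [h1 q s, h2 q s]
    rw [e]
    exact hclosed _ (hu q) _ (hv q)
  · intro u v w hu hv hw
    funext g
    simp only [h1, h2]
    exact congrFun (hSassoc _ (hu _) _ (hv _) _ (hw _)) (sof g)
  · intro g₀ u hu q
    obtain ⟨q', hq'⟩ := key g₀ q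
    have e : (fun s : S => u (g₀ * ((q : G) * (s : G))))
        = fun s : S => (fun x : S => u ((q' : G) * (x : G))) (sof g₀ * s) := by
      funext s
      apply congrArg
      push_cast
      rw [← mul_assoc, hq', mul_assoc]
    rw [e]
    exact hSinv (sof g₀) _ (hu q')
  · intro g₀ u v hu hv
    funext g
    obtain ⟨q', hq'⟩ := key g₀ (qof g)
    have hg : g₀ * g = (q' : G) * ((sof g₀ * sof g : S) : G) := by
      conv_lhs => rw [hchart g]
      push_cast
      rw [← mul_assoc, hq', mul_assoc]
    have hq1 : qof (g₀ * g) = q' := by rw [hg]; exact h1 q' _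
    have hq2 : sof (g₀ * g) = sof g₀ * sof g := by rw [hg]; exact h2 q' _
    have e : ∀ (w : G → R), (fun x : S => w (g₀ * ((qof g : G) * (x : G))))
        = fun x : S => (fun y : S => w ((q' : G) * (y : G))) (sof g₀ * x) := by
      intro w
      funext x
      apply congrArg
      push_cast
      rw [← mul_assoc, hq', mul_assoc]
    rw [e u, e v, hq1, hq2]
    exact congrFun (hSlinv (sof g₀) (fun y : S => u ((q' : G) * (y : G)))
      (fun y : S => v ((q' : G) * (y : G)))) (sof g)
end

section
/- Let B = S(ℝⁿ) with its standard bialgebra structure and let C = C^∞(ℝⁿ)[[t]] be given the coproduct Δ_t(t^n f)(x,y,t₁,t₂) = (t₁+t₂)^n f(x+y). With the left action X_i ⇀ (t^n f) = t^{n+1}(λ−1)∂f/∂x_i (and similarly the right action), the action map is a coalgebra morphism: Δ_t(a ⇀ f̃) = Δ_B(a) ⇀ Δ_t(f̃) for all a ∈ B, f̃ ∈ C. -/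
open Finset

/-- Partial derivative in the `i`-th coordinate direction. -/
noncomputable def pderiv' {n : ℕ} (i : Fin n) (f : (Fin n → ℝ) → ℝ) : (Fin n → ℝ) → ℝ :=
  fun x => fderiv ℝ f x (Pi.single i 1)

/-- Iterated partial derivative `∂^{|m|} f / ∂q^m` for a multi-index `m`. -/
noncomputable def mpderiv {n : ℕ} (m : Fin n → ℕ) (f : (Fin n → ℝ) → ℝ) :
    (Fin n → ℝ) → ℝ :=
  (List.finRange n).foldr (fun i F => (pderiv' i)^[m i] F) f

/-- `|m| = Σ m i` for a multi-index `m`. -/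
def msz {n : ℕ} (m : Fin n → ℕ) : ℕ := ∑ i, m i

/-- Product of binomial coefficients `C(r,l) = Π C(rᵢ,lᵢ)`. -/
def mchoose {n : ℕ} (r l : Fin n → ℕ) : ℕ := ∏ i, (r i).choose (l i)

/-- Iterated partial derivative in the first group of variables of a two-point
function `F(x,y)`. -/
noncomputable def mpderivFst {n : ℕ} (m : Fin n → ℕ)
    (F : (Fin n → ℝ) → (Fin n → ℝ) → ℝ) : (Fin n → ℝ) → (Fin n → ℝ) → ℝ :=
  fun x y => mpderiv m (fun x' => F x' y) x

/-- Iterated partial derivative in the second group of variables of a two-point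
function `F(x,y)`. -/
noncomputable def mpderivSnd {n : ℕ} (m : Fin n → ℕ)
    (F : (Fin n → ℝ) → (Fin n → ℝ) → ℝ) : (Fin n → ℝ) → (Fin n → ℝ) → ℝ :=
  fun x y => mpderiv m (F x) y

/- ### Auxiliary lemmas -/

namespace CoalgAux

variable {n : ℕ}

lemma pderiv'_contDiff (i : Fin n) {f : (Fin n → ℝ) → ℝ} (hf : ContDiff ℝ (⊤ : ℕ∞) f) :
    ContDiff ℝ (⊤ : ℕ∞) (pderiv' i f) :=
  (hf.fderiv_right (by simp)).clm_apply contDiff_const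

lemma iter_contDiff (i : Fin n) (k : ℕ) {f : (Fin n → ℝ) → ℝ} (hf : ContDiff ℝ (⊤ : ℕ∞) f) :
    ContDiff ℝ (⊤ : ℕ∞) ((pderiv' i)^[k] f) := by
  induction k with
  | zero => exact hf
  | succ k ih => rw [Function.iterate_succ_apply']; exact pderiv'_contDiff i ih

lemma foldr_contDiff (m : Fin n → ℕ) (L : List (Fin n)) {f : (Fin n → ℝ) → ℝ}
    (hf : ContDiff ℝ (⊤ : ℕ∞) f) :
    ContDiff ℝ (⊤ : ℕ∞) (L.foldr (fun i F => (pderiv' i)^[m i] F) f) := by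
  induction L with
  | nil => exact hf
  | cons i L ih => exact iter_contDiff i (m i) ih

lemma mpderiv_contDiff (m : Fin n → ℕ) {f : (Fin n → ℝ) → ℝ} (hf : ContDiff ℝ (⊤ : ℕ∞) f) :
    ContDiff ℝ (⊤ : ℕ∞) (mpderiv m f) :=
  foldr_contDiff m _ hf

lemma fderiv_comp_add {f : (Fin n → ℝ) → ℝ} (c x : Fin n → ℝ)
    (h : DifferentiableAt ℝ f (x + c)) :
    fderiv ℝ (fun z => f (z + c)) x = fderiv ℝ f (x + c) := by
  have := h.hasFDerivAt.comp x ((hasFDerivAt_id x).add_const c)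
  simpa [Function.comp_def] using this.fderiv

lemma pderiv'_comp_add (i : Fin n) {f : (Fin n → ℝ) → ℝ} (hf : Differentiable ℝ f)
    (c : Fin n → ℝ) :
    pderiv' i (fun z => f (z + c)) = fun x => pderiv' i f (x + c) := by
  funext x
  show fderiv ℝ (fun z => f (z + c)) x (Pi.single i 1) = _
  rw [fderiv_comp_add c x (hf _)]
  rfl

lemma iter_comp_add (i : Fin n) (k : ℕ) {f : (Fin n → ℝ) → ℝ} (hf : ContDiff ℝ (⊤ : ℕ∞) f)
    (c : Fin n → ℝ) :
    (pderiv' i)^[k] (fun z => f (z + c)) = fun x => (pderiv' i)^[k] f (x + c) := by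
  induction k with
  | zero => rfl
  | succ k ih =>
      rw [Function.iterate_succ_apply', Function.iterate_succ_apply', ih,
        pderiv'_comp_add i ((iter_contDiff i k hf).differentiable (by simp)) c]

lemma foldr_comp_add (m : Fin n → ℕ) (L : List (Fin n)) {f : (Fin n → ℝ) → ℝ}
    (hf : ContDiff ℝ (⊤ : ℕ∞) f) (c : Fin n → ℝ) :
    L.foldr (fun i F => (pderiv' i)^[m i] F) (fun z => f (z + c)) =
      fun x => L.foldr (fun i F => (pderiv' i)^[m i] F) f (x + c) := by
  induction L with
  | nil => rfl
  | cons i L ih =>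
      simp only [List.foldr_cons, ih]
      exact iter_comp_add i (m i) (foldr_contDiff m L hf) c

lemma mpderiv_comp_add (m : Fin n → ℕ) {f : (Fin n → ℝ) → ℝ} (hf : ContDiff ℝ (⊤ : ℕ∞) f)
    (c : Fin n → ℝ) :
    mpderiv m (fun z => f (z + c)) = fun x => mpderiv m f (x + c) :=
  foldr_comp_add m _ hf c

lemma pderiv'_comm (i j : Fin n) {f : (Fin n → ℝ) → ℝ} (hf : ContDiff ℝ (⊤ : ℕ∞) f) :
    pderiv' i (pderiv' j f) = pderiv' j (pderiv' i f) := by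
  funext x
  have hd : Differentiable ℝ (fderiv ℝ f) := (hf.fderiv_right (m := (⊤ : ℕ∞)) (by simp)).differentiable (by simp)
  have key : ∀ (k : Fin n) (v : Fin n → ℝ), pderiv' k (fun z => fderiv ℝ f z v) x =
      fderiv ℝ (fderiv ℝ f) x (Pi.single k 1) v := by
    intro k v
    show fderiv ℝ (fun z => (fderiv ℝ f z) v) x (Pi.single k 1) = _
    rw [fderiv_clm_apply (hd x) (differentiableAt_const v)]
    simp
  have symm := (hf.contDiffAt.isSymmSndFDerivAt (x := x) (by rw [minSmoothness_of_isRCLikeNormedField]; exact WithTop.coe_le_coe.mpr le_top))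
    (Pi.single i 1) (Pi.single j 1)
  show pderiv' i (fun z => fderiv ℝ f z (Pi.single j 1)) x =
       pderiv' j (fun z => fderiv ℝ f z (Pi.single i 1)) x
  rw [key, key, symm]

lemma pderiv'_comm_iter (i j : Fin n) (k : ℕ) {f : (Fin n → ℝ) → ℝ}
    (hf : ContDiff ℝ (⊤ : ℕ∞) f) :
    pderiv' i ((pderiv' j)^[k] f) = (pderiv' j)^[k] (pderiv' i f) := by
  induction k with
  | zero => rfl
  | succ k ih =>
      rw [Function.iterate_succ_apply', pderiv'_comm i j (iter_contDiff j k hf), ih]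
      exact (Function.iterate_succ_apply' _ _ _).symm

lemma pderiv'_comm_foldr (i : Fin n) (m : Fin n → ℕ) (L : List (Fin n))
    {f : (Fin n → ℝ) → ℝ} (hf : ContDiff ℝ (⊤ : ℕ∞) f) :
    pderiv' i (L.foldr (fun j F => (pderiv' j)^[m j] F) f) =
      L.foldr (fun j F => (pderiv' j)^[m j] F) (pderiv' i f) := by
  induction L with
  | nil => rfl
  | cons j L ih =>
      simp only [List.foldr_cons]
      rw [pderiv'_comm_iter i j (m j) (foldr_contDiff m L hf), ih]

lemma iter_comm_foldr (i : Fin n) (a : ℕ) (m : Fin n → ℕ) (L : List (Fin n))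
    {f : (Fin n → ℝ) → ℝ} (hf : ContDiff ℝ (⊤ : ℕ∞) f) :
    (pderiv' i)^[a] (L.foldr (fun j F => (pderiv' j)^[m j] F) f) =
      L.foldr (fun j F => (pderiv' j)^[m j] F) ((pderiv' i)^[a] f) := by
  induction a with
  | zero => rfl
  | succ a ih =>
      rw [Function.iterate_succ_apply', ih,
        pderiv'_comm_foldr i m L (iter_contDiff i a hf)]
      exact congrArg (fun g => List.foldr (fun j F => (pderiv' j)^[m j] F) g L)
        (Function.iterate_succ_apply' (pderiv' i) a f).symm

lemma foldr_foldr (l m : Fin n → ℕ) (L : List (Fin n)) {f : (Fin n → ℝ) → ℝ}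
    (hf : ContDiff ℝ (⊤ : ℕ∞) f) :
    L.foldr (fun j F => (pderiv' j)^[l j] F)
      (L.foldr (fun j F => (pderiv' j)^[m j] F) f) =
    L.foldr (fun j F => (pderiv' j)^[(l + m) j] F) f := by
  induction L with
  | nil => rfl
  | cons i L ih =>
      simp only [List.foldr_cons]
      rw [← iter_comm_foldr i (m i) l L (foldr_contDiff m L hf),
        ← Function.iterate_add_apply]
      have : l i + m i = (l + m) i := rfl
      rw [this]
      exact congrArg _ ih

lemma mpderiv_mpderiv (l m : Fin n → ℕ) {f : (Fin n → ℝ) → ℝ} (hf : ContDiff ℝ (⊤ : ℕ∞) f) :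
    mpderiv l (mpderiv m f) = mpderiv (l + m) f :=
  foldr_foldr l m _ hf

lemma binom_sum (r : Fin n → ℕ) (t₁ t₂ : ℝ) :
    ∑ l ∈ Finset.Icc 0 r, (mchoose r l : ℝ) * t₁ ^ msz l * t₂ ^ msz (r - l) =
      (t₁ + t₂) ^ msz r := by
  have hIcc : (Finset.Icc (0 : Fin n → ℕ) r) =
      Fintype.piFinset fun i => Finset.range (r i + 1) := by
    rw [Pi.Icc_eq]
    congr 1
    funext i
    ext k
    simp [Nat.lt_succ_iff]
  rw [hIcc, msz, ← Finset.prod_pow_eq_pow_sum]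
  have : ∀ i : Fin n, (t₁ + t₂) ^ r i =
      ∑ k ∈ Finset.range (r i + 1), t₁ ^ k * t₂ ^ (r i - k) * ((r i).choose k : ℝ) := by
    intro i; exact add_pow t₁ t₂ (r i)
  rw [Finset.prod_congr rfl fun i _ => this i, Finset.prod_univ_sum]
  refine Finset.sum_congr rfl fun l _ => ?_
  rw [Finset.prod_mul_distrib, Finset.prod_mul_distrib,
    Finset.prod_pow_eq_pow_sum, Finset.prod_pow_eq_pow_sum]
  have h1 : (mchoose r l : ℝ) = ∏ i, ((r i).choose (l i) : ℝ) := by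
    rw [mchoose]; push_cast; ring
  have h2 : msz l = ∑ i, l i := rfl
  have h3 : msz (r - l) = ∑ i, (r i - l i) := rfl
  rw [h1, h2, h3]; ring

end CoalgAux

/-- for `B = S(ℝⁿ)` with `Δ_B(p^r) = Σ_{l≤r} C(r,l) p^l ⊗ p^{r−l}` and
`C = C^∞(ℝⁿ)[[t]]` with coproduct `Δ_t(tᴺ f)(x,y,t₁,t₂) = (t₁+t₂)ᴺ f(x+y)`, the left
action `p^m ⇀ (tᴺ f) = t^{N+|m|}(λ−1)^{|m|} ∂^m f` is a coalgebra morphism: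
`Δ_t(a ⇀ f̃) = Δ_B(a) ⇀ Δ_t(f̃)` (with the convention that the formal variable acts as
`t₁` in the first factor and `t₂` in the second). -/
theorem action_is_coalgebra_morphism
    (n : ℕ) (lam t₁ t₂ : ℝ)
    (r : Fin n → ℕ) (N : ℕ)
    (f : (Fin n → ℝ) → ℝ) (hf : ContDiff ℝ (⊤ : ℕ∞) f)
    (x y : Fin n → ℝ) :
    (t₁ + t₂) ^ (N + msz r) * (lam - 1) ^ (msz r) * mpderiv r f (x + y) =
    ∑ l ∈ Finset.Icc 0 r,
      (mchoose r l : ℝ) *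
        (t₁ ^ (msz l) * (lam - 1) ^ (msz l)) *
        (t₂ ^ (msz (r - l)) * (lam - 1) ^ (msz (r - l))) *
        mpderivFst l (mpderivSnd (r - l) (fun x' y' => f (x' + y'))) x y *
        (t₁ + t₂) ^ N := by
  classical
  -- Step 1: identify the mixed partial derivative with `mpderiv r f (x + y)`.
  have hkey : ∀ l ∈ Finset.Icc 0 r,
      mpderivFst l (mpderivSnd (r - l) (fun x' y' => f (x' + y'))) x y =
        mpderiv r f (x + y) := by
    intro l hl
    have hlr : l ≤ r := (Finset.mem_Icc.mp hl).2
    set m := r - l with hm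
    have hsnd : ∀ x' y' : Fin n → ℝ,
        mpderivSnd m (fun x' y' => f (x' + y')) x' y' = mpderiv m f (x' + y') := by
      intro x' y'
      show mpderiv m (fun y'' => f (x' + y'')) y' = _
      have : (fun y'' => f (x' + y'')) = fun y'' => f (y'' + x') := by
        funext y''; rw [add_comm]
      rw [this, CoalgAux.mpderiv_comp_add m hf x', add_comm]
    show mpderiv l (fun x' => mpderivSnd m (fun x' y' => f (x' + y')) x' y) x = _
    have : (fun x' => mpderivSnd m (fun x' y' => f (x' + y')) x' y) =
        fun x' => mpderiv m f (x' + y) := by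
      funext x'; exact hsnd x' y
    rw [this, CoalgAux.mpderiv_comp_add l (CoalgAux.mpderiv_contDiff m hf) y]
    show mpderiv l (mpderiv m f) (x + y) = _
    rw [CoalgAux.mpderiv_mpderiv l m hf]
    have hr : l + m = r := by funext i; exact Nat.add_sub_cancel' (hlr i)
    rw [hr]
  -- Step 2: rewrite each summand and sum the binomial coefficients.
  rw [Finset.sum_congr rfl fun l hl => by rw [hkey l hl]]
  have hmsz : ∀ l ∈ Finset.Icc 0 r, msz l + msz (r - l) = msz r := by
    intro l hl
    have hlr : l ≤ r := (Finset.mem_Icc.mp hl).2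
    rw [msz, msz, msz, ← Finset.sum_add_distrib]
    exact Finset.sum_congr rfl fun i _ => Nat.add_sub_cancel' (hlr i)
  have expand : ∀ l ∈ Finset.Icc 0 r,
      (mchoose r l : ℝ) * (t₁ ^ msz l * (lam - 1) ^ msz l) *
          (t₂ ^ msz (r - l) * (lam - 1) ^ msz (r - l)) * mpderiv r f (x + y) *
          (t₁ + t₂) ^ N =
        ((mchoose r l : ℝ) * t₁ ^ msz l * t₂ ^ msz (r - l)) *
          ((lam - 1) ^ msz r * mpderiv r f (x + y) * (t₁ + t₂) ^ N) := by
    intro l hl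
    rw [← hmsz l hl, pow_add]
    ring
  rw [Finset.sum_congr rfl expand, ← Finset.sum_mul, CoalgAux.binom_sum r t₁ t₂,
    pow_add]
  ring
end
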